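/- arXiv:2511.15446 — 6 statements merged into one kernel-verified Lean document; each statement's English description precedes it below -/
import Mathlib

section
/- Let (Ω, F, P) be a probability space and let Y, μ, μ̂ be integrable real-valued random variables with E[μ] ∈ (0, ∞). Assume (calibration) μ = E[Y | σ(μ)] almost surely, and (out-of-sample evaluation) Y and μ̂ are conditionally independent given σ(μ). Then E[Y] = E[μ] and, for every α ∈ (0,1), C_{μ,μ̂}(α) = C_{Y,μ̂}(α), i.e. E[μ · 1_{μ̂ > F_{μ̂}^{-1}(1−α)}] / E[μ] = E[Y · 1_{μ̂ > F_{μ̂}^{-1}(1−α)}] / E[Y]. -/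
open MeasureTheory ProbabilityTheory MeasurableSpace Set

-- helper: measures agree on sets differing within a null set
lemma meas_congr_null {Ω : Type*} [MeasurableSpace Ω] {ν : Measure Ω} {N s t : Set Ω}
    (hN : ν N = 0) (h : ∀ ω, ω ∉ N → (ω ∈ s ↔ ω ∈ t)) : ν s = ν t := by
  refine measure_congr ?_
  have : ∀ᵐ ω ∂ν, ω ∉ N := by
    rw [ae_iff]; simpa using hN
  filter_upwards [this] with ω hω
  exact propext (h ω hω)

theorem key {Ω : Type*} [MeasurableSpace Ω] [StandardBorelSpace Ω] [Nonempty Ω]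
    (P : Measure Ω) [IsProbabilityMeasure P]
    (Y μ μhat : Ω → ℝ)
    (hYint : Integrable Y P) (hμint : Integrable μ P) (hμhatint : Integrable μhat P)
    (hμmeas : Measurable μ)
    (hcal : μ =ᵐ[P] P[Y | MeasurableSpace.comap μ inferInstance])
    (hindep : CondIndepFun (MeasurableSpace.comap μ inferInstance) hμmeas.comap_le Y μhat P)
    (q : ℝ) :
    ∫ ω in {ω | q < μhat ω}, Y ω ∂P = ∫ ω in {ω | q < μhat ω}, μ ω ∂P := by
  have hm' : MeasurableSpace.comap μ inferInstance ≤ ‹MeasurableSpace Ω› := hμmeas.comap_le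
  set A : Set Ω := {ω | q < μhat ω} with hAdef
  obtain ⟨g, hgmeas, hgae⟩ : ∃ g, Measurable g ∧ μhat =ᵐ[P] g :=
    ⟨_, hμhatint.aemeasurable.measurable_mk, hμhatint.aemeasurable.ae_eq_mk⟩
  obtain ⟨Y', hY'meas, hY'ae⟩ : ∃ Y', Measurable Y' ∧ Y =ᵐ[P] Y' :=
    ⟨_, hYint.aemeasurable.measurable_mk, hYint.aemeasurable.ae_eq_mk⟩
  set B : Set Ω := g ⁻¹' (Set.Ioi q) with hBdef
  have hB : MeasurableSet B := hgmeas measurableSet_Ioi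
  have hAB : A =ᵐ[P] B := by
    filter_upwards [hgae] with ω h
    show (q < μhat ω) = (q < g ω)
    rw [h]
  -- the exceptional null set
  set N : Set Ω := toMeasurable P {ω | ¬ (Y ω = Y' ω ∧ μhat ω = g ω)} with hNdef
  have hNmeas : MeasurableSet N := measurableSet_toMeasurable _ _
  have hNP : P N = 0 := by
    rw [hNdef, measure_toMeasurable]
    exact ae_iff.mp (hY'ae.and hgae)
  have hNsub : ∀ ω, ω ∉ N → Y ω = Y' ω ∧ μhat ω = g ω := by
    intro ω hω
    by_contra h
    exact hω (subset_toMeasurable _ _ h)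
  -- a.e. the conditional kernel gives no mass to N
  have hκN : ∀ᵐ ω ∂P, condExpKernel P (MeasurableSpace.comap μ inferInstance) ω N = 0 := by
    have h1 := condExpKernel_ae_eq_condExp (μ := P) hm' hNmeas
    have h2 : (P⟦N | (MeasurableSpace.comap μ inferInstance)⟧) =ᵐ[P] 0 := by
      have hz : N.indicator (fun _ => (1 : ℝ)) =ᵐ[P] 0 := by
        have : ∀ᵐ ω ∂P, ω ∉ N := by rw [ae_iff]; simpa using hNP
        filter_upwards [this] with ω hω
        simp [Set.indicator_of_notMem hω]
      calc (P⟦N | (MeasurableSpace.comap μ inferInstance)⟧) =ᵐ[P] P[(0 : Ω → ℝ) | (MeasurableSpace.comap μ inferInstance)] := condExp_congr_ae hz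
        _ = 0 := condExp_zero
    filter_upwards [h1.trans h2] with ω hω
    have hne : condExpKernel P (MeasurableSpace.comap μ inferInstance) ω N ≠ ⊤ := measure_ne_top _ _
    simpa [measureReal_eq_zero_iff hne] using hω
  -- conditional independence identities for rational level sets
  have hind : ∀ᵐ ω ∂P, ∀ r : ℚ,
      condExpKernel P (MeasurableSpace.comap μ inferInstance) ω (Y ⁻¹' Set.Iic (r : ℝ) ∩ A)
        = condExpKernel P (MeasurableSpace.comap μ inferInstance) ω (Y ⁻¹' Set.Iic (r : ℝ)) * condExpKernel P (MeasurableSpace.comap μ inferInstance) ω A := by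
    rw [ae_all_iff]
    intro r
    exact ae_of_ae_trim hm'
      (hindep (Y ⁻¹' Set.Iic (r : ℝ)) A ⟨Set.Iic (r : ℝ), measurableSet_Iic, rfl⟩
        ⟨Set.Ioi q, measurableSet_Ioi, rfl⟩)
  have hYκ : ∀ᵐ ω ∂P, Integrable Y (condExpKernel P (MeasurableSpace.comap μ inferInstance) ω) := hYint.condExpKernel_ae
  -- main pointwise factorization
  have hmain : ∀ᵐ ω ∂P,
      ∫ y, B.indicator Y y ∂(condExpKernel P (MeasurableSpace.comap μ inferInstance) ω)
        = (∫ y, Y y ∂(condExpKernel P (MeasurableSpace.comap μ inferInstance) ω)) * (condExpKernel P (MeasurableSpace.comap μ inferInstance) ω B).toReal := by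
    filter_upwards [hκN, hind, hYκ] with ω hκN hind hYκ
    set ν : Measure Ω := condExpKernel P (MeasurableSpace.comap μ inferInstance) ω with hνdef
    have hYae : Y =ᵐ[ν] Y' := by
      have : ∀ᵐ y ∂ν, y ∉ N := by rw [ae_iff]; simpa using measure_mono_null (fun y hy => hy) hκN
      filter_upwards [this] with y hy
      exact (hNsub y hy).1
    -- independence of σ(Y') and {B} under ν
    have hIndepSets : IndepSets (Set.range fun r : ℚ => Y' ⁻¹' Set.Iic (r : ℝ)) {B} ν := by
      rw [IndepSets_iff]
      rintro t1 t2 ⟨r, rfl⟩ ht2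
      rw [Set.mem_singleton_iff] at ht2
      subst ht2
      have e1 : ν (Y' ⁻¹' Set.Iic (r : ℝ) ∩ B) = ν (Y ⁻¹' Set.Iic (r : ℝ) ∩ A) := by
        refine meas_congr_null hκN fun y hy => ?_
        obtain ⟨h1, h2⟩ := hNsub y hy
        simp [Set.mem_inter_iff, Set.mem_preimage, h1, h2, A, B]
      have e2 : ν (Y' ⁻¹' Set.Iic (r : ℝ)) = ν (Y ⁻¹' Set.Iic (r : ℝ)) := by
        refine meas_congr_null hκN fun y hy => ?_
        simp [Set.mem_preimage, (hNsub y hy).1]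
      have e3 : ν B = ν A := by
        refine meas_congr_null hκN fun y hy => ?_
        simp [Set.mem_preimage, (hNsub y hy).2, A, B]
      rw [e1, e2, e3]
      exact hind r
    have hgen : MeasurableSpace.comap Y' (inferInstance : MeasurableSpace ℝ)
        = MeasurableSpace.generateFrom (Set.range fun r : ℚ => Y' ⁻¹' Set.Iic (r : ℝ)) := by
      conv_lhs => rw [show (inferInstance : MeasurableSpace ℝ) = borel ℝ from BorelSpace.measurable_eq,
        Real.borel_eq_generateFrom_Iic_rat]
      rw [MeasurableSpace.comap_generateFrom]
      congr 1
      ext s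
      simp only [Set.mem_image, Set.mem_iUnion, Set.mem_singleton_iff, Set.mem_range]
      constructor
      · rintro ⟨t, ⟨r, rfl⟩, rfl⟩; exact ⟨r, rfl⟩
      · rintro ⟨r, rfl⟩; exact ⟨Set.Iic (r : ℝ), ⟨r, rfl⟩, rfl⟩
    have hpi1 : IsPiSystem (Set.range fun r : ℚ => Y' ⁻¹' Set.Iic (r : ℝ)) := by
      rintro _ ⟨r, rfl⟩ _ ⟨s, rfl⟩ _
      refine ⟨min r s, ?_⟩
      rw [← Set.preimage_inter, Set.Iic_inter_Iic]
      push_cast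
      rfl
    have hIndep : Indep (MeasurableSpace.comap Y' inferInstance)
        (MeasurableSpace.generateFrom {B}) ν :=
      IndepSets.indep hY'meas.comap_le
        (MeasurableSpace.generateFrom_le fun s hs => by
          rw [Set.mem_singleton_iff] at hs; subst hs; exact hB)
        hpi1 (IsPiSystem.singleton B) hgen rfl hIndepSets
    have hBgen : MeasurableSet[MeasurableSpace.generateFrom ({B} : Set (Set Ω))] B :=
      MeasurableSpace.measurableSet_generateFrom rfl
    have hindmeas : @Measurable Ω ℝ (MeasurableSpace.generateFrom {B}) _
        (B.indicator fun _ => (1 : ℝ)) :=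
      (measurable_const).indicator hBgen
    have hIF : IndepFun Y' (B.indicator fun _ => (1 : ℝ)) ν :=
      indep_of_indep_of_le_right hIndep hindmeas.comap_le
    have hmul := ProbabilityTheory.IndepFun.integral_mul_eq_mul_integral hIF (hY'meas.aestronglyMeasurable)
      ((measurable_const.indicator hB).aestronglyMeasurable)
    have hprod : ∫ y, B.indicator Y y ∂ν
        = ∫ y, (Y' * B.indicator fun _ => (1 : ℝ)) y ∂ν := by
      refine integral_congr_ae ?_
      filter_upwards [hYae] with y hy
      by_cases hyB : y ∈ B <;>
        simp [Set.indicator_of_mem, Set.indicator_of_notMem, hyB, hy]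
    rw [hprod, hmul, integral_indicator_const (1 : ℝ) hB, smul_eq_mul, mul_one,
      integral_congr_ae hYae]
    rfl
  -- now assemble the global equalities
  have hYB : Integrable (B.indicator Y) P := hYint.indicator hB
  have hindint : Integrable (B.indicator fun _ => (1 : ℝ)) P := (integrable_const 1).indicator hB
  have hμB : Integrable (μ * B.indicator fun _ => (1 : ℝ)) P := by
    refine (hμint.indicator hB).congr ?_
    refine Filter.Eventually.of_forall fun ω => ?_
    by_cases hω : ω ∈ B <;>
      simp [Set.indicator_of_mem, Set.indicator_of_notMem, hω]
  have hμsm : StronglyMeasurable[(MeasurableSpace.comap μ inferInstance)] μ :=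
    (measurable_iff_comap_le.mpr le_rfl).stronglyMeasurable
  have step1 : ∫ ω in B, Y ω ∂P = ∫ ω, (μ * (P⟦B | (MeasurableSpace.comap μ inferInstance)⟧)) ω ∂P := by
    rw [← integral_indicator hB, ← integral_condExp hm' (f := B.indicator Y)]
    refine integral_congr_ae ?_
    calc P[B.indicator Y | (MeasurableSpace.comap μ inferInstance)]
        =ᵐ[P] fun ω => ∫ y, B.indicator Y y ∂(condExpKernel P (MeasurableSpace.comap μ inferInstance) ω) :=
          condExp_ae_eq_integral_condExpKernel hm' hYB
      _ =ᵐ[P] fun ω => (∫ y, Y y ∂(condExpKernel P (MeasurableSpace.comap μ inferInstance) ω)) * (condExpKernel P (MeasurableSpace.comap μ inferInstance) ω B).toReal :=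
          hmain
      _ =ᵐ[P] fun ω => (P[Y | (MeasurableSpace.comap μ inferInstance)]) ω * (P⟦B | (MeasurableSpace.comap μ inferInstance)⟧) ω := by
          refine ((condExp_ae_eq_integral_condExpKernel hm' hYint).symm.mul
            (condExpKernel_ae_eq_condExp hm' hB)).mono fun ω h => ?_
          exact h
      _ =ᵐ[P] fun ω => μ ω * (P⟦B | (MeasurableSpace.comap μ inferInstance)⟧) ω := by
          filter_upwards [hcal] with ω h
          rw [h]
  have step2 : ∫ ω, (μ * (P⟦B | (MeasurableSpace.comap μ inferInstance)⟧)) ω ∂P = ∫ ω in B, μ ω ∂P := by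
    have hpull : P[μ * B.indicator fun _ => (1 : ℝ) | (MeasurableSpace.comap μ inferInstance)]
        =ᵐ[P] μ * (P⟦B | (MeasurableSpace.comap μ inferInstance)⟧) :=
      condExp_mul_of_stronglyMeasurable_left hμsm hμB hindint
    rw [← integral_congr_ae hpull, integral_condExp hm', ← integral_indicator hB]
    refine integral_congr_ae (Filter.Eventually.of_forall fun ω => ?_)
    by_cases hω : ω ∈ B <;>
      simp [Set.indicator_of_mem, Set.indicator_of_notMem, hω]
  calc ∫ ω in A, Y ω ∂P = ∫ ω in B, Y ω ∂P := by
        rw [Measure.restrict_congr_set hAB]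
    _ = ∫ ω in B, μ ω ∂P := step1.trans step2
    _ = ∫ ω in A, μ ω ∂P := by rw [Measure.restrict_congr_set hAB]


open MeasureTheory ProbabilityTheory

/-- Distribution function `F_X(y) = P(X ≤ y)`. -/
noncomputable def distFun {Ω : Type*} [MeasurableSpace Ω] (P : Measure Ω) (X : Ω → ℝ) (y : ℝ) : ℝ :=
  (P {ω | X ω ≤ y}).toReal

/-- Left-continuous generalized inverse `F_X^{-1}(p) = inf {y : F_X(y) ≥ p}`. -/
noncomputable def genInv {Ω : Type*} [MeasurableSpace Ω] (P : Measure Ω) (X : Ω → ℝ) (p : ℝ) : ℝ :=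
  sInf {y : ℝ | p ≤ distFun P X y}

/-- Cumulative accuracy profile `C_{Z,T}(α) = E[Z · 1_{T > F_T^{-1}(1-α)}] / E[Z]`. -/
noncomputable def CAP {Ω : Type*} [MeasurableSpace Ω] (P : Measure Ω) (Z T : Ω → ℝ) (α : ℝ) : ℝ :=
  (∫ ω in {ω | genInv P T (1 - α) < T ω}, Z ω ∂P) / ∫ ω, Z ω ∂P

/-- under calibration `μ = E[Y | σ(μ)]` a.s. and conditional independence of `Y`
and `μ̂` given `σ(μ)`, we have `E[Y] = E[μ]` and `C_{μ,μ̂}(α) = C_{Y,μ̂}(α)` for `α ∈ (0,1)`. -/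
theorem stmt0 {Ω : Type*} [MeasurableSpace Ω] [StandardBorelSpace Ω] [Nonempty Ω]
    (P : Measure Ω) [IsProbabilityMeasure P]
    (Y μ μhat : Ω → ℝ)
    (hYint : Integrable Y P) (hμint : Integrable μ P) (hμhatint : Integrable μhat P)
    (hμmeas : Measurable μ)
    (hmeanpos : 0 < ∫ ω, μ ω ∂P)
    (hcal : μ =ᵐ[P] P[Y | MeasurableSpace.comap μ inferInstance])
    (hindep : CondIndepFun (MeasurableSpace.comap μ inferInstance) hμmeas.comap_le Y μhat P) :
    (∫ ω, Y ω ∂P) = (∫ ω, μ ω ∂P) ∧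
      ∀ α ∈ Set.Ioo (0 : ℝ) 1, CAP P μ μhat α = CAP P Y μhat α := by
  have hYE : ∫ ω, Y ω ∂P = ∫ ω, μ ω ∂P := by
    rw [integral_congr_ae hcal]
    exact (integral_condExp (μ := P) (f := Y) hμmeas.comap_le).symm
  refine ⟨hYE, fun α _ => ?_⟩
  rw [CAP, CAP, hYE,
    key P Y μ μhat hYint hμint hμhatint hμmeas hcal hindep (genInv P μhat (1 - α))]
end

section
/- Let (Ω, F, P) be a probability space and let Y ≥ 0, μ, μ̂ be integrable real random variables with E[Y] ∈ (0,∞), satisfying μ = E[Y | σ(μ)] a.s. and Y conditionally independent of μ̂ given σ(μ). Assume in addition that the distribution functions F_Y and F_{μ̂} are continuous. Then ∫_0^1 C_{Y,μ̂}(α) dα ≤ ∫_0^1 L_Y(α) dα. -/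
open MeasureTheory ProbabilityTheory

/-- (Mirrored) Lorenz curve `L_Y(α) = E[Y · 1_{Y > F_Y^{-1}(1-α)}] / E[Y]`. -/
noncomputable def Lorenz {Ω : Type*} [MeasurableSpace Ω] (P : Measure Ω) (Y : Ω → ℝ) (α : ℝ) : ℝ :=
  (∫ ω in {ω | genInv P Y (1 - α) < Y ω}, Y ω ∂P) / ∫ ω, Y ω ∂P

section Helpers

open Set Filter Topology

set_option linter.unusedSectionVars false

variable {Ω : Type*} [MeasurableSpace Ω] (P : Measure Ω) [IsProbabilityMeasure P] (T : Ω → ℝ)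

lemma distFun_mono : Monotone (distFun P T) := by
  intro a b hab
  have : P {ω | T ω ≤ a} ≤ P {ω | T ω ≤ b} := measure_mono (fun ω h => le_trans h hab)
  exact ENNReal.toReal_mono (measure_ne_top _ _) this

lemma distFun_nonneg (y : ℝ) : 0 ≤ distFun P T y := ENNReal.toReal_nonneg

lemma distFun_le_one (y : ℝ) : distFun P T y ≤ 1 := by
  have : P {ω | T ω ≤ y} ≤ 1 := prob_le_one
  simpa [distFun] using ENNReal.toReal_mono ENNReal.one_ne_top this

lemma distFun_congr {T T' : Ω → ℝ} (h : T =ᵐ[P] T') : distFun P T = distFun P T' := by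
  funext y
  have : {ω | T ω ≤ y} =ᵐ[P] {ω | T' ω ≤ y} := by
    filter_upwards [h] with ω hω
    show (T ω ≤ y) = (T' ω ≤ y)
    rw [hω]
  simp [distFun, measure_congr this]

lemma exists_distFun_lt (hT : Measurable T) {p : ℝ} (hp : 0 < p) : ∃ z : ℝ, distFun P T z < p := by
  have hae : Tendsto (fun n : ℕ => P {ω | T ω ≤ -(n:ℝ)}) atTop (𝓝 (P (⋂ n : ℕ, {ω | T ω ≤ -(n:ℝ)}))) := by
    apply tendsto_measure_iInter_atTop
    · exact fun n => (hT measurableSet_Iic).nullMeasurableSet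
    · intro n m hnm ω h
      have h2 : (n:ℝ) ≤ (m:ℝ) := Nat.cast_le.mpr hnm
      have h3 : T ω ≤ -(m:ℝ) := h
      show T ω ≤ -(n:ℝ)
      linarith
    · exact ⟨0, measure_ne_top _ _⟩
  have hempty : (⋂ n : ℕ, {ω | T ω ≤ -(n:ℝ)}) = ∅ := by
    ext ω
    simp only [mem_iInter, mem_setOf_eq, mem_empty_iff_false, iff_false, not_forall]
    obtain ⟨n, hn⟩ := exists_nat_gt (-(T ω))
    exact ⟨n, by linarith⟩
  rw [hempty, measure_empty] at hae
  have h2 : Tendsto (fun n : ℕ => distFun P T (-(n:ℝ))) atTop (𝓝 0) := by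
    simpa [distFun, Function.comp_def] using (ENNReal.tendsto_toReal (by simp)).comp hae
  obtain ⟨n, hn⟩ := (h2.eventually (eventually_lt_nhds hp)).exists
  exact ⟨-(n:ℝ), hn⟩

lemma exists_le_distFun {p : ℝ} (hp : p < 1) : ∃ y : ℝ, p ≤ distFun P T y := by
  have hae : Tendsto (fun n : ℕ => P {ω | T ω ≤ (n:ℝ)}) atTop (𝓝 (P (⋃ n : ℕ, {ω | T ω ≤ (n:ℝ)}))) := by
    apply tendsto_measure_iUnion_atTop
    intro n m hnm ω h
    have h2 : (n:ℝ) ≤ (m:ℝ) := Nat.cast_le.mpr hnm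
    have h3 : T ω ≤ (n:ℝ) := h
    show T ω ≤ (m:ℝ)
    linarith
  have huniv : (⋃ n : ℕ, {ω | T ω ≤ (n:ℝ)}) = univ := by
    ext ω
    simp only [mem_iUnion, mem_setOf_eq, mem_univ, iff_true]
    obtain ⟨n, hn⟩ := exists_nat_gt (T ω)
    exact ⟨n, hn.le⟩
  rw [huniv, measure_univ] at hae
  have h2 : Tendsto (fun n : ℕ => distFun P T (n:ℝ)) atTop (𝓝 1) := by
    simpa [distFun, Function.comp_def] using (ENNReal.tendsto_toReal (by simp)).comp hae
  obtain ⟨n, hn⟩ := (h2.eventually (eventually_gt_nhds hp)).exists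
  exact ⟨(n:ℝ), hn.le⟩

lemma bddBelow_distFun_set (hT : Measurable T) {p : ℝ} (hp : 0 < p) :
    BddBelow {y : ℝ | p ≤ distFun P T y} := by
  obtain ⟨z, hz⟩ := exists_distFun_lt P T hT hp
  refine ⟨z, fun y hy => ?_⟩
  by_contra hyz
  push_neg at hyz
  exact absurd (le_trans hy (distFun_mono P T hyz.le)) (not_le.mpr hz)

lemma genInv_lt_of_lt (hT : Measurable T) (hc : Continuous (distFun P T)) {p t : ℝ}
    (hp : 0 < p) (hpt : p < distFun P T t) : genInv P T p < t := by
  have h1 : ∀ᶠ y in 𝓝 t, p < distFun P T y :=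
    (hc.continuousAt (x := t)).eventually (eventually_gt_nhds hpt)
  obtain ⟨y, hy1, hy2⟩ := ((h1.filter_mono nhdsWithin_le_nhds).and
    (self_mem_nhdsWithin (s := Set.Iio t) (a := t))).exists
  exact lt_of_le_of_lt (csInf_le (bddBelow_distFun_set P T hT hp) hy1.le) hy2

lemma le_distFun_of_genInv_lt (hT : Measurable T) {p t : ℝ} (hp : 0 < p) (hp1 : p < 1)
    (h : genInv P T p < t) : p ≤ distFun P T t := by
  have hne : {y : ℝ | p ≤ distFun P T y}.Nonempty := exists_le_distFun P T hp1
  obtain ⟨y, hy, hyt⟩ := (csInf_lt_iff (bddBelow_distFun_set P T hT hp) hne).mp h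
  exact le_trans hy (distFun_mono P T hyt.le)

lemma layer_integral (hT : Measurable T) (hc : Continuous (distFun P T)) (t z : ℝ) :
    ∫ α in Set.Ioo (0:ℝ) 1, ({α : ℝ | genInv P T (1-α) < t}).indicator (fun _ => z) α
      = z * distFun P T t := by
  set c := distFun P T t with hcdef
  have hc0 : 0 ≤ c := distFun_nonneg P T t
  have hc1 : c ≤ 1 := distFun_le_one P T t
  have h1 : ∀ᵐ α ∂(volume.restrict (Set.Ioo (0:ℝ) 1)), α ∈ Set.Ioo (0:ℝ) 1 :=
    ae_restrict_mem measurableSet_Ioo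
  have h2 : ∀ᵐ α ∂(volume.restrict (Set.Ioo (0:ℝ) 1)), α ≠ 1 - c := by
    rw [ae_iff]
    have hsub : {α : ℝ | ¬ α ≠ 1 - c} ⊆ {1 - c} := by intro α hα; simpa using not_not.mp hα
    have h0 : (volume.restrict (Set.Ioo (0:ℝ) 1)) {(1:ℝ) - c} = 0 := by
      refine le_antisymm (le_trans (Measure.restrict_le_self _) ?_) zero_le
      simp
    exact measure_mono_null hsub h0
  have hae : (fun α => ({α : ℝ | genInv P T (1-α) < t}).indicator (fun _ => z) α)
      =ᵐ[volume.restrict (Set.Ioo (0:ℝ) 1)] (Set.Ioi (1-c)).indicator (fun _ => z) := by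
    filter_upwards [h1, h2] with α hα hne
    by_cases hmem : 1 - c < α
    · have hq : genInv P T (1-α) < t :=
        genInv_lt_of_lt P T hT hc (by linarith [hα.2] : (0:ℝ) < 1-α) (by rw [← hcdef]; linarith)
      simp [Set.indicator, hq, hmem]
    · have hq : ¬ genInv P T (1-α) < t := by
        intro h
        have hle : 1 - α ≤ c :=
          le_distFun_of_genInv_lt P T hT (by linarith [hα.2] : (0:ℝ) < 1-α)
            (by linarith [hα.1] : 1-α < 1) h
        have hlt : 1 - α < c := lt_of_le_of_ne hle (fun he => hne (by linarith))
        exact hmem (by linarith)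
      simp [Set.indicator, hq, hmem]
  rw [integral_congr_ae hae, integral_indicator measurableSet_Ioi,
    Measure.restrict_restrict measurableSet_Ioi, setIntegral_const]
  have hset : Set.Ioi (1-c) ∩ Set.Ioo (0:ℝ) 1 = Set.Ioo (1-c) 1 := by
    ext α
    simp only [Set.mem_inter_iff, Set.mem_Ioi, Set.mem_Ioo]
    constructor
    · rintro ⟨h, _, h2⟩; exact ⟨h, h2⟩
    · rintro ⟨h, h2⟩; exact ⟨h, by linarith, h2⟩
  rw [hset, measureReal_def, Real.volume_Ioo]
  have : (1 : ℝ) - (1 - c) = c := by ring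
  rw [this, ENNReal.toReal_ofReal hc0, smul_eq_mul, mul_comm]

lemma cap_integral (Z : Ω → ℝ) (hZ : Measurable Z) (hZ0 : ∀ ω, 0 ≤ Z ω) (hZint : Integrable Z P)
    (hT : Measurable T) (hc : Continuous (distFun P T)) :
    ∫ α in Set.Ioo (0:ℝ) 1, (∫ ω in {ω | genInv P T (1-α) < T ω}, Z ω ∂P)
      = ∫ ω, Z ω * distFun P T (T ω) ∂P := by
  set μα := volume.restrict (Set.Ioo (0:ℝ) 1) with hμα
  have hprob : IsProbabilityMeasure μα := ⟨by simp [hμα]⟩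
  have hFmeas : Measurable (distFun P T) := (distFun_mono P T).measurable
  -- measure preserving projections
  have mp_fst : MeasurePreserving Prod.fst (μα.prod P) μα :=
    ⟨measurable_fst, by simp [Measure.map_fst_prod]⟩
  have mp_snd : MeasurePreserving Prod.snd (μα.prod P) P :=
    ⟨measurable_snd, by simp [Measure.map_snd_prod]⟩
  set f : ℝ → Ω → ℝ := fun α ω => if genInv P T (1-α) < T ω then Z ω else 0 with hf
  set g : ℝ × Ω → ℝ := fun p => if 1 - p.1 < distFun P T (T p.2) then Z p.2 else 0 with hg
  have hVmeas : MeasurableSet {p : ℝ × Ω | 1 - p.1 < distFun P T (T p.2)} :=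
    measurableSet_lt ((measurable_const.sub measurable_fst)) ((hFmeas.comp hT).comp measurable_snd)
  have hgmeas : StronglyMeasurable g := by
    have : g = Set.indicator {p : ℝ × Ω | 1 - p.1 < distFun P T (T p.2)} (fun p => Z p.2) := by
      funext p; simp [hg, Set.indicator]
    rw [this]
    exact ((hZ.comp measurable_snd).stronglyMeasurable).indicator hVmeas
  -- a.e. equality of uncurry f and g
  have h1 : ∀ᵐ p ∂(μα.prod P), p.1 ∈ Set.Ioo (0:ℝ) 1 :=
    mp_fst.quasiMeasurePreserving.ae (ae_restrict_mem measurableSet_Ioo)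
  have h2 : ∀ᵐ p ∂(μα.prod P), 1 - p.1 ≠ distFun P T (T p.2) := by
    rw [ae_iff]
    have hDmeas : MeasurableSet {p : ℝ × Ω | 1 - p.1 = distFun P T (T p.2)} :=
      measurableSet_eq_fun (measurable_const.sub measurable_fst)
        ((hFmeas.comp hT).comp measurable_snd)
    have : {p : ℝ × Ω | ¬ 1 - p.1 ≠ distFun P T (T p.2)}
        = {p : ℝ × Ω | 1 - p.1 = distFun P T (T p.2)} := by
      ext p; simp
    rw [this, Measure.prod_apply_symm hDmeas]
    have h3 : ∀ ω, μα {a : ℝ | 1 - a = distFun P T (T ω)} = 0 := by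
      intro ω
      have hsub : {a : ℝ | 1 - a = distFun P T (T ω)} ⊆ {1 - distFun P T (T ω)} := by
        intro α hα
        simp only [Set.mem_setOf_eq] at hα
        simp [show α = 1 - distFun P T (T ω) by linarith]
      refine measure_mono_null hsub ?_
      refine le_antisymm (le_trans (Measure.restrict_le_self _) ?_) zero_le
      simp
    simp [h3]
  have haeeq : Function.uncurry f =ᵐ[μα.prod P] g := by
    filter_upwards [h1, h2] with p hp hne
    simp only [Function.uncurry, hf, hg]
    by_cases hlt : 1 - p.1 < distFun P T (T p.2)
    · have : genInv P T (1 - p.1) < T p.2 :=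
        genInv_lt_of_lt P T hT hc (by linarith [hp.2]) hlt
      simp [this, hlt]
    · have : ¬ genInv P T (1 - p.1) < T p.2 := by
        intro h
        have hle := le_distFun_of_genInv_lt P T hT (by linarith [hp.2] : (0:ℝ) < 1 - p.1)
          (by linarith [hp.1] : 1 - p.1 < 1) h
        exact hlt (lt_of_le_of_ne hle hne)
      simp [this, hlt]
  -- integrability
  have hZsnd : Integrable (fun p : ℝ × Ω => Z p.2) (μα.prod P) :=
    (mp_snd.integrable_comp hZ.aestronglyMeasurable).mpr hZint
  have hgint : Integrable g (μα.prod P) := by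
    refine hZsnd.mono' hgmeas.aestronglyMeasurable ?_
    filter_upwards with p
    by_cases hlt : 1 - p.1 < distFun P T (T p.2) <;>
      simp [hg, hlt, abs_of_nonneg (hZ0 p.2), hZ0 p.2]
  have hfint : Integrable (Function.uncurry f) (μα.prod P) := hgint.congr haeeq.symm
  have hswap := integral_integral_swap hfint
  calc ∫ α in Set.Ioo (0:ℝ) 1, (∫ ω in {ω | genInv P T (1-α) < T ω}, Z ω ∂P)
      = ∫ α, ∫ ω, f α ω ∂P ∂μα := by
        refine integral_congr_ae (Filter.Eventually.of_forall fun α => ?_)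
        have hsmeas : MeasurableSet {ω | genInv P T (1-α) < T ω} :=
          measurableSet_lt measurable_const hT
        show (∫ ω in {ω | genInv P T (1-α) < T ω}, Z ω ∂P) = ∫ ω, f α ω ∂P
        rw [← integral_indicator hsmeas]
        refine integral_congr_ae (Filter.Eventually.of_forall fun ω => ?_)
        simp [hf, Set.indicator]
    _ = ∫ ω, ∫ α, f α ω ∂μα ∂P := hswap
    _ = ∫ ω, Z ω * distFun P T (T ω) ∂P := by
        refine integral_congr_ae (Filter.Eventually.of_forall fun ω => ?_)
        have := layer_integral P T hT hc (T ω) (Z ω)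
        show (∫ α, f α ω ∂μα) = Z ω * distFun P T (T ω)
        rw [← this, hμα]
        refine integral_congr_ae (Filter.Eventually.of_forall fun α => ?_)
        simp [hf, Set.indicator]

lemma atomless_of_continuous (hT : Measurable T) (hc : Continuous (distFun P T)) (t : ℝ) :
    P {ω | T ω = t} = 0 := by
  have key : ∀ ε : ℝ, 0 < ε → (P {ω | T ω = t}).toReal ≤ distFun P T t - distFun P T (t - ε) := by
    intro ε hε
    have hsub : {ω | T ω = t} ⊆ {ω | T ω ≤ t} \ {ω | T ω ≤ t - ε} := by
      intro ω hω
      simp only [Set.mem_setOf_eq] at hω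
      refine ⟨le_of_eq hω, fun h => ?_⟩
      simp only [Set.mem_setOf_eq, hω] at h
      linarith
    have hBsubA : {ω | T ω ≤ t - ε} ⊆ {ω | T ω ≤ t} := fun ω h => le_trans h (sub_le_self t hε.le)
    have hdiff : P ({ω | T ω ≤ t} \ {ω | T ω ≤ t - ε})
        = P {ω | T ω ≤ t} - P {ω | T ω ≤ t - ε} :=
      measure_diff hBsubA (hT measurableSet_Iic).nullMeasurableSet (measure_ne_top _ _)
    have h1 : P {ω | T ω = t} ≤ P {ω | T ω ≤ t} - P {ω | T ω ≤ t - ε} := by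
      rw [← hdiff]; exact measure_mono hsub
    have h2 := ENNReal.toReal_mono (by
      exact ne_top_of_le_ne_top (measure_ne_top _ _) tsub_le_self) h1
    rwa [ENNReal.toReal_sub_of_le (measure_mono hBsubA) (measure_ne_top _ _)] at h2
  have h0 : (P {ω | T ω = t}).toReal ≤ 0 := by
    by_contra hpos
    push_neg at hpos
    obtain ⟨δ, hδpos, hδ⟩ := Metric.continuousAt_iff.mp (hc.continuousAt (x := t))
      ((P {ω | T ω = t}).toReal) hpos
    have hdist : dist (t - δ/2) t < δ := by
      rw [Real.dist_eq]
      rw [show t - δ/2 - t = -(δ/2) by ring, abs_neg, abs_of_nonneg (by linarith)]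
      linarith
    have hlt := hδ hdist
    rw [Real.dist_eq] at hlt
    have := key (δ/2) (by linarith)
    have habs := abs_lt.mp hlt
    linarith [habs.1, habs.2]
  have := ENNReal.toReal_nonneg (a := P {ω | T ω = t})
  have heq : (P {ω | T ω = t}).toReal = 0 := le_antisymm h0 this
  exact (ENNReal.toReal_eq_zero_iff _).mp heq |>.resolve_right (measure_ne_top _ _)

lemma prod_rep (Z : Ω → ℝ) (hZ : Measurable Z) (hZ0 : ∀ ω, 0 ≤ Z ω) (hZint : Integrable Z P)
    (S : Ω → ℝ) (hS : Measurable S) :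
    ∫ ω, Z ω * distFun P S (S ω) ∂P
      = ∫ p, (if S p.2 ≤ S p.1 then Z p.1 else 0) ∂(P.prod P) := by
  set f : Ω → Ω → ℝ := fun ω ω' => if S ω' ≤ S ω then Z ω else 0 with hf
  have hWmeas : MeasurableSet {p : Ω × Ω | S p.2 ≤ S p.1} :=
    measurableSet_le (hS.comp measurable_snd) (hS.comp measurable_fst)
  have hmeas : StronglyMeasurable (Function.uncurry f) := by
    have : Function.uncurry f = Set.indicator {p : Ω × Ω | S p.2 ≤ S p.1} (fun p => Z p.1) := by
      funext p; simp [Function.uncurry, hf, Set.indicator]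
    rw [this]
    exact ((hZ.comp measurable_fst).stronglyMeasurable).indicator hWmeas
  have mp_fst : MeasurePreserving Prod.fst (P.prod P) P :=
    ⟨measurable_fst, by simp [Measure.map_fst_prod]⟩
  have hZfst : Integrable (fun p : Ω × Ω => Z p.1) (P.prod P) :=
    (mp_fst.integrable_comp hZ.aestronglyMeasurable).mpr hZint
  have hfint : Integrable (Function.uncurry f) (P.prod P) := by
    refine hZfst.mono' hmeas.aestronglyMeasurable ?_
    filter_upwards with p
    by_cases h : S p.2 ≤ S p.1 <;>
      simp [Function.uncurry, hf, h, abs_of_nonneg (hZ0 p.1), hZ0 p.1]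
  have hii := integral_integral hfint
  rw [← hii]
  refine integral_congr_ae (Filter.Eventually.of_forall fun ω => ?_)
  have hsmeas : MeasurableSet {ω' | S ω' ≤ S ω} := hS measurableSet_Iic
  have h4 : (∫ ω', f ω ω' ∂P) = ∫ ω', Set.indicator {ω' | S ω' ≤ S ω} (fun _ => Z ω) ω' ∂P := by
    refine integral_congr_ae (Filter.Eventually.of_forall fun ω' => ?_)
    simp [hf, Set.indicator]
  show Z ω * distFun P S (S ω) = ∫ y, f ω y ∂P
  rw [h4, integral_indicator hsmeas, setIntegral_const]
  simp [distFun, smul_eq_mul, mul_comm]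
  exact Or.inl rfl

lemma key_ineq (Z : Ω → ℝ) (hZ : Measurable Z) (hZ0 : ∀ ω, 0 ≤ Z ω) (hZint : Integrable Z P)
    (hT : Measurable T) (hTc : Continuous (distFun P T)) :
    ∫ ω, Z ω * distFun P T (T ω) ∂P ≤ ∫ ω, Z ω * distFun P Z (Z ω) ∂P := by
  rw [prod_rep P Z hZ hZ0 hZint T hT, prod_rep P Z hZ hZ0 hZint Z hZ]
  set fT : Ω × Ω → ℝ := fun p => if T p.2 ≤ T p.1 then Z p.1 else 0 with hfT
  set fZ : Ω × Ω → ℝ := fun p => if Z p.2 ≤ Z p.1 then Z p.1 else 0 with hfZ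
  have hTmeas : StronglyMeasurable fT := by
    have : fT = Set.indicator {p : Ω × Ω | T p.2 ≤ T p.1} (fun p => Z p.1) := by
      funext p; simp [hfT, Set.indicator]
    rw [this]
    exact ((hZ.comp measurable_fst).stronglyMeasurable).indicator
      (measurableSet_le (hT.comp measurable_snd) (hT.comp measurable_fst))
  have hZmeas : StronglyMeasurable fZ := by
    have : fZ = Set.indicator {p : Ω × Ω | Z p.2 ≤ Z p.1} (fun p => Z p.1) := by
      funext p; simp [hfZ, Set.indicator]
    rw [this]
    exact ((hZ.comp measurable_fst).stronglyMeasurable).indicator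
      (measurableSet_le (hZ.comp measurable_snd) (hZ.comp measurable_fst))
  have mp_fst : MeasurePreserving Prod.fst (P.prod P) P :=
    ⟨measurable_fst, by simp [Measure.map_fst_prod]⟩
  have hZfst : Integrable (fun p : Ω × Ω => Z p.1) (P.prod P) :=
    (mp_fst.integrable_comp hZ.aestronglyMeasurable).mpr hZint
  have hbound : ∀ (g : Ω × Ω → ℝ), StronglyMeasurable g →
      (∀ p, g p = 0 ∨ g p = Z p.1) → Integrable g (P.prod P) := by
    intro g hg hcase
    refine hZfst.mono' hg.aestronglyMeasurable ?_
    filter_upwards with p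
    rcases hcase p with h | h <;> simp [h, abs_of_nonneg (hZ0 p.1), hZ0 p.1]
  have hfTint : Integrable fT (P.prod P) :=
    hbound fT hTmeas (fun p => by by_cases h : T p.2 ≤ T p.1 <;> simp [hfT, h])
  have hfZint : Integrable fZ (P.prod P) :=
    hbound fZ hZmeas (fun p => by by_cases h : Z p.2 ≤ Z p.1 <;> simp [hfZ, h])
  have mp_swap : MeasurePreserving Prod.swap (P.prod P) (P.prod P) :=
    Measure.measurePreserving_swap
  have hswap_int : ∀ (g : Ω × Ω → ℝ), Integrable g (P.prod P) →
      Integrable (fun p => g (Prod.swap p)) (P.prod P) := fun g hg =>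
    (mp_swap.integrable_comp hg.aestronglyMeasurable).mpr hg
  have hswap_eq : ∀ (g : Ω × Ω → ℝ),
      ∫ p, g (Prod.swap p) ∂(P.prod P) = ∫ p, g p ∂(P.prod P) := by
    intro g
    exact integral_prod_swap g
  -- a.e. T p.1 ≠ T p.2
  have hne : ∀ᵐ p ∂(P.prod P), T p.1 ≠ T p.2 := by
    rw [ae_iff]
    have hmeasD : MeasurableSet {p : Ω × Ω | T p.1 = T p.2} :=
      measurableSet_eq_fun (hT.comp measurable_fst) (hT.comp measurable_snd)
    have : {p : Ω × Ω | ¬ T p.1 ≠ T p.2} = {p : Ω × Ω | T p.1 = T p.2} := by ext p; simp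
    rw [this, Measure.prod_apply hmeasD]
    have h3 : ∀ ω, P {a | T ω = T a} = 0 := by
      intro ω
      have he : {a | T ω = T a} = {ω' | T ω' = T ω} := by ext ω'; exact eq_comm
      rw [he]
      exact atomless_of_continuous P T hT hTc (T ω)
    have h4 : ∀ ω, P (Prod.mk ω ⁻¹' {p : Ω × Ω | T p.1 = T p.2}) = 0 := fun ω => h3 ω
    simp only [h4]
    simp
  have hmono : ∫ p, (fT p + fT (Prod.swap p)) ∂(P.prod P)
      ≤ ∫ p, (fZ p + fZ (Prod.swap p)) ∂(P.prod P) := by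
    refine integral_mono_ae (hfTint.add (hswap_int fT hfTint)) (hfZint.add (hswap_int fZ hfZint)) ?_
    filter_upwards [hne] with p hp
    have e1 : fT p = if T p.2 ≤ T p.1 then Z p.1 else 0 := rfl
    have e2 : fT p.swap = if T p.1 ≤ T p.2 then Z p.2 else 0 := rfl
    have e3 : fZ p = if Z p.2 ≤ Z p.1 then Z p.1 else 0 := rfl
    have e4 : fZ p.swap = if Z p.1 ≤ Z p.2 then Z p.2 else 0 := rfl
    rw [e1, e2, e3, e4]
    rcases le_total (Z p.1) (Z p.2) with hz | hz <;>
      split_ifs <;>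
      first
        | linarith [hZ0 p.1, hZ0 p.2]
        | (exfalso; exact hp (le_antisymm (by assumption) (by assumption)))
  rw [integral_add hfTint (hswap_int fT hfTint), integral_add hfZint (hswap_int fZ hfZint),
    hswap_eq fT, hswap_eq fZ] at hmono
  linarith


end Helpers

/-- under calibration, conditional independence, and continuity of `F_Y` and
`F_μ̂`, we have `∫_0^1 C_{Y,μ̂}(α) dα ≤ ∫_0^1 L_Y(α) dα`. -/
theorem stmt4 {Ω : Type*} [MeasurableSpace Ω] [StandardBorelSpace Ω] [Nonempty Ω]
    (P : Measure Ω) [IsProbabilityMeasure P]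
    (Y μ μhat : Ω → ℝ) (hYpos : ∀ ω, 0 ≤ Y ω)
    (hYint : Integrable Y P) (hμint : Integrable μ P) (hμhatint : Integrable μhat P)
    (hμmeas : Measurable μ)
    (hmeanpos : 0 < ∫ ω, Y ω ∂P)
    (hcal : μ =ᵐ[P] P[Y | MeasurableSpace.comap μ inferInstance])
    (hindep : CondIndepFun (MeasurableSpace.comap μ inferInstance) hμmeas.comap_le Y μhat P)
    (hYcont : Continuous (distFun P Y)) (hμhatcont : Continuous (distFun P μhat)) :
    ∫ α in Set.Ioo (0 : ℝ) 1, CAP P Y μhat α ≤ ∫ α in Set.Ioo (0 : ℝ) 1, Lorenz P Y α := by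
  -- measurable modifications
  set Y' : Ω → ℝ := fun ω => max (hYint.1.mk Y ω) 0 with hY'def
  have hY'meas : Measurable Y' :=
    (hYint.1.stronglyMeasurable_mk.measurable).max measurable_const
  have hYY' : Y =ᵐ[P] Y' := by
    filter_upwards [hYint.1.ae_eq_mk] with ω hω
    show Y ω = max (hYint.1.mk Y ω) 0
    rw [← hω]
    exact (max_eq_left (hYpos ω)).symm
  have hY'0 : ∀ ω, 0 ≤ Y' ω := fun ω => le_max_right _ _
  have hY'int : Integrable Y' P := hYint.congr hYY'
  set T' := hμhatint.1.mk μhat with hT'def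
  have hT'meas : Measurable T' := hμhatint.1.stronglyMeasurable_mk.measurable
  have hTT' : μhat =ᵐ[P] T' := hμhatint.1.ae_eq_mk
  -- transfer distFun / genInv
  have dY : distFun P Y = distFun P Y' := distFun_congr P hYY'
  have dT : distFun P μhat = distFun P T' := distFun_congr P hTT'
  have gY : genInv P Y = genInv P Y' := by funext p; simp [genInv, dY]
  have gT : genInv P μhat = genInv P T' := by funext p; simp [genInv, dT]
  have hY'cont : Continuous (distFun P Y') := dY ▸ hYcont
  have hT'cont : Continuous (distFun P T') := dT ▸ hμhatcont
  set c := ∫ ω, Y ω ∂P with hcdef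
  -- rewrite CAP integrals
  have hCAP : ∀ α : ℝ, CAP P Y μhat α
      = (∫ ω in {ω | genInv P T' (1 - α) < T' ω}, Y' ω ∂P) / c := by
    intro α
    have hsets : {ω | genInv P μhat (1 - α) < μhat ω} =ᵐ[P] {ω | genInv P T' (1 - α) < T' ω} := by
      filter_upwards [hTT'] with ω hω
      show (genInv P μhat (1 - α) < μhat ω) = (genInv P T' (1 - α) < T' ω)
      rw [hω, gT]
    rw [CAP, setIntegral_congr_set hsets,
      integral_congr_ae (ae_restrict_of_ae hYY')]
  have hLor : ∀ α : ℝ, Lorenz P Y α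
      = (∫ ω in {ω | genInv P Y' (1 - α) < Y' ω}, Y' ω ∂P) / c := by
    intro α
    have hsets : {ω | genInv P Y (1 - α) < Y ω} =ᵐ[P] {ω | genInv P Y' (1 - α) < Y' ω} := by
      filter_upwards [hYY'] with ω hω
      show (genInv P Y (1 - α) < Y ω) = (genInv P Y' (1 - α) < Y' ω)
      rw [hω, gY]
    rw [Lorenz, setIntegral_congr_set hsets,
      integral_congr_ae (ae_restrict_of_ae hYY')]
  calc ∫ α in Set.Ioo (0 : ℝ) 1, CAP P Y μhat α
      = (∫ α in Set.Ioo (0 : ℝ) 1,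
          (∫ ω in {ω | genInv P T' (1 - α) < T' ω}, Y' ω ∂P)) / c := by
        rw [← integral_div]
        exact integral_congr_ae (Filter.Eventually.of_forall fun α => hCAP α)
    _ = (∫ ω, Y' ω * distFun P T' (T' ω) ∂P) / c := by
        rw [cap_integral P T' Y' hY'meas hY'0 hY'int hT'meas hT'cont]
    _ ≤ (∫ ω, Y' ω * distFun P Y' (Y' ω) ∂P) / c := by
        gcongr ?_ / _
        exact key_ineq P T' Y' hY'meas hY'0 hY'int hT'meas hT'cont
    _ = (∫ α in Set.Ioo (0 : ℝ) 1,
          (∫ ω in {ω | genInv P Y' (1 - α) < Y' ω}, Y' ω ∂P)) / c := by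
        rw [cap_integral P Y' Y' hY'meas hY'0 hY'int hY'meas hY'cont]
    _ = ∫ α in Set.Ioo (0 : ℝ) 1, Lorenz P Y α := by
        rw [← integral_div]
        exact (integral_congr_ae (Filter.Eventually.of_forall fun α => hLor α)).symm
end

section
/- Let y_1, …, y_n ≥ 0 with S = Σ y_i > 0, not all equal, and let m_1, …, m_n ∈ ℝ be predictions. With σ↓, σ↑ the tie-breaking permutations defined below, set the mid-solution CAP corner heights C_i = (1/(2S))Σ_{j=1}^i (y_{σ↓(j)} + y_{σ↑(j)}) and A = Σ_{i=1}^n (C_i + C_{i−1})/(2n) − 1/2, and with y_{(1)} ≥ … ≥ y_{(n)} a decreasing rearrangement set L_i = (1/S)Σ_{j=1}^i y_{(j)} and B = Σ_{i=1}^n (L_i + L_{i−1})/(2n) − 1/2. Then A ≤ B, i.e. the Gini score A/B is at most 1. -/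
/-- Partial sum `Σ_{j=1}^i f_j` of the first `i` entries of `f : Fin n → ℝ`. -/
noncomputable def psum {n : ℕ} (f : Fin n → ℝ) (i : ℕ) : ℝ :=
  ∑ j ∈ Finset.univ.filter (fun j : Fin n => (j : ℕ) < i), f j

lemma sum_le_initial {n : ℕ} (z : Fin n → ℝ) (hz : Antitone z)
    (i : ℕ) (T : Finset (Fin n))
    (hcard : T.card = (Finset.univ.filter (fun j : Fin n => (j : ℕ) < i)).card) :
    ∑ t ∈ T, z t ≤ ∑ t ∈ Finset.univ.filter (fun j : Fin n => (j : ℕ) < i), z t := by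
  classical
  set I := Finset.univ.filter (fun j : Fin n => (j : ℕ) < i) with hIdef
  have hTI : (T \ I).card = (I \ T).card := by
    have h1 := Finset.card_inter_add_card_sdiff T I
    have h2 := Finset.card_inter_add_card_sdiff I T
    rw [Finset.inter_comm] at h2
    omega
  let e := Finset.equivOfCardEq hTI
  have key : ∑ t ∈ T \ I, z t ≤ ∑ t ∈ I \ T, z t := by
    rw [← Finset.sum_coe_sort (T \ I) z, ← Finset.sum_coe_sort (I \ T) z,
        ← Equiv.sum_comp e (fun b : (I \ T : Finset (Fin n)) => z b)]
    apply Finset.sum_le_sum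
    intro a _
    apply hz
    have ha : (a : Fin n) ∉ Finset.univ.filter (fun j : Fin n => (j : ℕ) < i) :=
      (Finset.mem_sdiff.mp a.2).2
    have hb : ((e a : (I \ T : Finset (Fin n))) : Fin n) ∈
        Finset.univ.filter (fun j : Fin n => (j : ℕ) < i) :=
      (Finset.mem_sdiff.mp (e a).2).1
    have ha' : ¬ ((a : Fin n) : ℕ) < i := fun h =>
      ha (Finset.mem_filter.mpr ⟨Finset.mem_univ _, h⟩)
    have hb' := (Finset.mem_filter.mp hb).2
    rw [Fin.le_def]
    omega
  calc ∑ t ∈ T, z t = ∑ t ∈ T ∩ I, z t + ∑ t ∈ T \ I, z t :=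
        (Finset.sum_inter_add_sum_sdiff T I z).symm
    _ ≤ ∑ t ∈ T ∩ I, z t + ∑ t ∈ I \ T, z t := by linarith
    _ = ∑ t ∈ I, z t := by
        rw [Finset.inter_comm]; exact Finset.sum_inter_add_sum_sdiff I T z

lemma card_init {n : ℕ} {i : ℕ} (h : i ≤ n) :
    (Finset.univ.filter (fun j : Fin n => (j : ℕ) < i)).card = i := by
  rw [← Finset.card_range i]
  apply Finset.card_bij (fun (j : Fin n) _ => (j : ℕ))
  · intro a ha
    simp only [Finset.mem_filter, Finset.mem_univ, true_and] at ha
    simpa using ha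
  · intro a _ b _ hab
    exact Fin.val_injective hab
  · intro b hb
    simp only [Finset.mem_range] at hb
    exact ⟨⟨b, lt_of_lt_of_le hb h⟩, by simp [hb], rfl⟩

lemma init_avg {n : ℕ} (z : Fin n → ℝ) (hz : Antitone z) {i : ℕ} (h : i ≤ n) :
    (i : ℝ) * (∑ t, z t) ≤ (n : ℝ) * ∑ t ∈ Finset.univ.filter (fun j : Fin n => (j : ℕ) < i), z t := by
  classical
  set I := Finset.univ.filter (fun j : Fin n => (j : ℕ) < i) with hIdef
  set J := Finset.univ.filter (fun j : Fin n => ¬ (j : ℕ) < i) with hJdef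
  have hPQ : ∑ t ∈ I, z t + ∑ t ∈ J, z t = ∑ t, z t :=
    Finset.sum_filter_add_sum_filter_not _ _ _
  have hcI : I.card = i := card_init h
  have hcJ : J.card = n - i := by
    have h3 := Finset.card_filter_add_card_filter_not
      (s := (Finset.univ : Finset (Fin n))) (p := fun j : Fin n => (j : ℕ) < i)
    rw [Finset.card_univ, Fintype.card_fin, ← hIdef, ← hJdef] at h3
    omega
  have hcross : ∀ j ∈ I, ∑ t ∈ J, z t ≤ ((n - i : ℕ) : ℝ) * z j := by
    intro j hj
    have hb : ∀ k ∈ J, z k ≤ z j := by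
      intro k hk
      apply hz
      rw [hIdef, Finset.mem_filter] at hj
      rw [hJdef, Finset.mem_filter] at hk
      rw [Fin.le_def]; omega
    have := Finset.sum_le_card_nsmul J z (z j) hb
    rw [hcJ] at this
    simpa [nsmul_eq_mul] using this
  have hsum : (i : ℝ) * ∑ t ∈ J, z t ≤ ((n - i : ℕ) : ℝ) * ∑ t ∈ I, z t := by
    calc (i : ℝ) * ∑ t ∈ J, z t = ∑ _j ∈ I, ∑ t ∈ J, z t := by
          rw [Finset.sum_const, hcI, nsmul_eq_mul]
      _ ≤ ∑ j ∈ I, ((n - i : ℕ) : ℝ) * z j := Finset.sum_le_sum hcross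
      _ = ((n - i : ℕ) : ℝ) * ∑ t ∈ I, z t := by rw [Finset.mul_sum]
  have hni : ((n - i : ℕ) : ℝ) = (n : ℝ) - i := by
    rw [Nat.cast_sub h]
  rw [hni] at hsum
  nlinarith [hsum, hPQ]

lemma sum_odd_aux (n : ℕ) : ∑ i ∈ Finset.range n, (2 * i + 1) = n ^ 2 := by
  induction n with
  | zero => simp
  | succ k ih => rw [Finset.sum_range_succ, ih]; ring

/-- the mid-solution CAP area `A` is at most the Lorenz area `B`, i.e. the
Gini score `A/B` is at most `1`. -/
theorem stmt13 (n : ℕ) (y m : Fin n → ℝ) (hpos : ∀ i, 0 ≤ y i)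
    (S : ℝ) (hS : S = ∑ i, y i) (hSpos : 0 < S)
    (hne : ∃ j k, j ≠ k ∧ y j ≠ y k)
    (σd σu : Equiv.Perm (Fin n))
    (hd1 : Antitone (fun i : Fin n => m (σd i)))
    (hd2 : ∀ j k : Fin n, j < k → m (σd j) = m (σd k) → y (σd k) ≤ y (σd j))
    (hu1 : Antitone (fun i : Fin n => m (σu i)))
    (hu2 : ∀ j k : Fin n, j < k → m (σu j) = m (σu k) → y (σu j) ≤ y (σu k))
    (τ : Equiv.Perm (Fin n)) (hτ : Antitone (fun i : Fin n => y (τ i)))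
    (C L : ℕ → ℝ)
    (hC : ∀ i : ℕ, C i = (1 / (2 * S)) * psum (fun j => y (σd j) + y (σu j)) i)
    (hL : ∀ i : ℕ, L i = (1 / S) * psum (fun j => y (τ j)) i)
    (A B : ℝ)
    (hA : A = (∑ i ∈ Finset.range n, (C (i + 1) + C i) / (2 * n)) - 1 / 2)
    (hB : B = (∑ i ∈ Finset.range n, (L (i + 1) + L i) / (2 * n)) - 1 / 2) :
    A ≤ B ∧ A / B ≤ 1 := by
  classical
  obtain ⟨j0, k0, hjk0, hyne⟩ := hne
  have npos : 0 < n := j0.pos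
  have hnR : (0 : ℝ) < n := by exact_mod_cast npos
  set z : Fin n → ℝ := fun i => y (τ i) with hzdef
  have hS' : S = ∑ t, z t := by
    rw [hS]; exact (Equiv.sum_comp τ y).symm
  -- partial sums of any permuted y are dominated by sorted partial sums
  have psum_perm : ∀ (π : Equiv.Perm (Fin n)) (i : ℕ),
      psum (fun j => y (π j)) i ≤ psum z i := by
    intro π i
    have hinj : Function.Injective (fun j : Fin n => τ.symm (π j)) := by
      intro a b hab
      exact π.injective (τ.symm.injective hab)
    have heq : psum (fun j => y (π j)) i
        = ∑ t ∈ (Finset.univ.filter (fun j : Fin n => (j : ℕ) < i)).image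
            (fun j => τ.symm (π j)), z t := by
      rw [Finset.sum_image (fun a _ b _ h => hinj h)]
      apply Finset.sum_congr rfl
      intro j _
      simp [hzdef]
    rw [heq, psum]
    apply sum_le_initial z hτ i
    rw [Finset.card_image_of_injective _ hinj]
  -- C i ≤ L i for every i
  have hCL : ∀ i : ℕ, C i ≤ L i := by
    intro i
    rw [hC, hL]
    have hadd : psum (fun j => y (σd j) + y (σu j)) i
        = psum (fun j => y (σd j)) i + psum (fun j => y (σu j)) i := by
      simp [psum, Finset.sum_add_distrib]
    have h1 := psum_perm σd i
    have h2 := psum_perm σu i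
    rw [hadd]
    have hle : psum (fun j => y (σd j)) i + psum (fun j => y (σu j)) i
        ≤ 2 * psum z i := by linarith
    calc (1 / (2 * S)) * (psum (fun j => y (σd j)) i + psum (fun j => y (σu j)) i)
        ≤ (1 / (2 * S)) * (2 * psum z i) := by
          apply mul_le_mul_of_nonneg_left hle
          positivity
      _ = (1 / S) * psum z i := by field_simp
  have hAB : A ≤ B := by
    rw [hA, hB]
    apply sub_le_sub_right
    apply Finset.sum_le_sum
    intro i _
    gcongr
    · exact hCL (i + 1)
    · exact hCL i
  refine ⟨hAB, ?_⟩
  -- now show 0 < B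
  have hpz : ∀ i : ℕ, psum z i = ∑ t ∈ Finset.univ.filter (fun j : Fin n => (j : ℕ) < i), z t :=
    fun i => rfl
  have hLlow : ∀ i : ℕ, i ≤ n → (i : ℝ) / n ≤ L i := by
    intro i hi
    rw [hL]
    have h1 : (i : ℝ) * S ≤ (n : ℝ) * psum z i := by
      rw [hS']; exact init_avg z hτ hi
    have h2 : (i : ℝ) / n ≤ psum z i / S := by
      rw [div_le_div_iff₀ hnR hSpos]; linarith
    calc (i : ℝ) / n ≤ psum z i / S := h2
      _ = (1 / S) * psum z i := by ring
  -- the top value is strictly above the average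
  set z0 : ℝ := z ⟨0, npos⟩ with hz0def
  have hmax : ∀ t, z t ≤ z0 := by
    intro t
    exact hτ (by rw [Fin.le_def]; exact Nat.zero_le _)
  have hex : ∃ t, z t < z0 := by
    by_contra hcon
    push_neg at hcon
    have hconst : ∀ t, z t = z0 := fun t => le_antisymm (hmax t) (hcon t)
    apply hyne
    have h1 : y j0 = z (τ.symm j0) := by simp [hzdef]
    have h2 : y k0 = z (τ.symm k0) := by simp [hzdef]
    rw [h1, h2, hconst, hconst]
  obtain ⟨t0, ht0⟩ := hex
  have hSlt : S < n * z0 := by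
    rw [hS']
    calc ∑ t, z t < ∑ _t : Fin n, z0 :=
          Finset.sum_lt_sum (fun t _ => hmax t) ⟨t0, Finset.mem_univ _, ht0⟩
      _ = n * z0 := by simp [Finset.card_univ, mul_comm]
  have hpz1 : psum z 1 = z0 := by
    have hone : Finset.univ.filter (fun j : Fin n => (j : ℕ) < 1)
        = {(⟨0, npos⟩ : Fin n)} := by
      ext t
      simp only [Finset.mem_filter, Finset.mem_univ, true_and, Finset.mem_singleton,
        Fin.ext_iff]
      omega
    rw [hpz, hone, Finset.sum_singleton]
  have hL1 : 1 / (n : ℝ) < L 1 := by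
    rw [hL, hpz1]
    calc 1 / (n : ℝ) < z0 / S := by
          rw [div_lt_div_iff₀ hnR hSpos]; nlinarith
      _ = (1 / S) * z0 := by ring
  have hL0 : L 0 = 0 := by
    rw [hL]
    simp [psum]
  -- diagonal sums to 1/2
  have hnat : ∑ i ∈ Finset.range n, (2 * i + 1) = n ^ 2 := sum_odd_aux n
  have hdiag : ∑ i ∈ Finset.range n, (((i : ℝ) + 1) / n + (i : ℝ) / n) / (2 * n) = 1 / 2 := by
    have hstep : ∑ i ∈ Finset.range n, (((i : ℝ) + 1) / n + (i : ℝ) / n) / (2 * n)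
        = (∑ i ∈ Finset.range n, (2 * (i : ℝ) + 1)) / (2 * n ^ 2) := by
      rw [Finset.sum_div]
      apply Finset.sum_congr rfl
      intro i _
      field_simp
      ring
    have hcast : ∑ i ∈ Finset.range n, (2 * (i : ℝ) + 1) = (n : ℝ) ^ 2 := by
      have := congrArg (Nat.cast : ℕ → ℝ) hnat
      push_cast at this
      linarith [this]
    rw [hstep, hcast]
    rw [div_eq_div_iff (by positivity) (by norm_num : (2:ℝ) ≠ 0)]
    ring
  have hBpos : 0 < B := by
    rw [hB, ← hdiag, ← Finset.sum_sub_distrib]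
    apply Finset.sum_pos'
    · intro i hi
      rw [Finset.mem_range] at hi
      have h1 := hLlow (i + 1) hi
      have h2 := hLlow i (le_of_lt hi)
      push_cast at h1
      rw [sub_nonneg]
      gcongr
    · refine ⟨0, Finset.mem_range.mpr npos, ?_⟩
      have h2n : (0 : ℝ) < 2 * n := by positivity
      have hnum : (((0 : ℕ) : ℝ) + 1) / n + ((0 : ℕ) : ℝ) / n < L (0 + 1) + L 0 := by
        rw [hL0]
        norm_num
        simpa using hL1
      rw [sub_pos]
      exact (div_lt_div_iff_of_pos_right h2n).mpr hnum
  rw [div_le_one hBpos]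
  exact hAB
end

section
/- Let (y_i, m_i, w_i), 1 ≤ i ≤ n, be a sample with weights w_i > 0, W = Σ w_i, T = Σ w_i y_i > 0. Let σ↓, σ↑ be tie-breaking permutations as defined below, and define α↓_i = (1/W)Σ_{j=1}^i w_{σ↓(j)}, C↓_i = (1/T)Σ_{j=1}^i w_{σ↓(j)} y_{σ↓(j)}, A↓ = Σ_{i=1}^n (C↓_i + C↓_{i−1})(α↓_i − α↓_{i−1})/2 − 1/2, and analogously α↑_i, C↑_i, A↑ using σ↑. Let m*_1 > … > m*_K be the distinct prediction values, w*_k = Σ_{i : m_i = m*_k} w_i, t*_k = Σ_{i : m_i = m*_k} w_i y_i, α*_k = (1/W)Σ_{j=1}^k w*_j, C*_k = (1/T)Σ_{j=1}^k t*_j, and A* = Σ_{k=1}^K (C*_k + C*_{k−1})(α*_k − α*_{k−1})/2 − 1/2. Then (A↓ + A↑)/2 = A*; that is, the mid-solution area equals the area obtained by connecting the aggregated (tie-free) corner set by straight lines. -/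
noncomputable def kk {α : Type*} [LinearOrder α] (i j : α) : ℝ :=
  (if j < i then 2 else 0) + (if j = i then 1 else 0)

lemma kk_self {α : Type*} [LinearOrder α] (i : α) : kk i i = 1 := by
  simp [kk]

lemma kk_of_lt {α : Type*} [LinearOrder α] {i j : α} (h : i < j) : kk i j = 0 := by
  simp [kk, not_lt_of_gt h, h.ne']

lemma kk_of_gt {α : Type*} [LinearOrder α] {i j : α} (h : j < i) : kk i j = 2 := by
  simp [kk, h, h.ne]

lemma kk_add_swap {α : Type*} [LinearOrder α] (i j : α) : kk i j + kk j i = 2 := by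
  rcases lt_trichotomy i j with h | h | h
  · rw [kk_of_lt h, kk_of_gt h]; ring
  · subst h; rw [kk_self]; ring
  · rw [kk_of_gt h, kk_of_lt h]; ring

lemma psum_succ {n : ℕ} (f : Fin n → ℝ) (i : ℕ) (hi : i < n) :
    psum f (i + 1) = psum f i + f ⟨i, hi⟩ := by
  unfold psum
  rw [show (Finset.univ.filter (fun j : Fin n => (j : ℕ) < i + 1))
      = insert ⟨i, hi⟩ (Finset.univ.filter (fun j : Fin n => (j : ℕ) < i)) from ?_,
    Finset.sum_insert (by simp)]
  · ring
  · ext j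
    simp [Nat.lt_succ_iff_lt_or_eq, Fin.ext_iff, or_comm]
    constructor <;> intro h <;> omega

lemma kk_row {N : ℕ} (G : Fin N → ℝ) (i : Fin N) :
    ∑ j, kk i j * G j = 2 * psum G i + G i := by
  have h : ∀ j : Fin N, kk i j * G j
      = (if j < i then 2 * G j else 0) + (if j = i then G j else 0) := by
    intro j
    simp only [kk]
    split_ifs with h1 h2 h2 <;> ring
  simp only [h, Finset.sum_add_distrib]
  congr 1
  · rw [← Finset.sum_filter]
    unfold psum
    rw [Finset.mul_sum]
    apply Finset.sum_congr
    · ext j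
      simp only [Finset.mem_filter, Finset.mem_univ, true_and, Fin.lt_def]
    · intros; rfl
  · simp

lemma area_double {N : ℕ} (F G : Fin N → ℝ) :
    ∑ i ∈ Finset.range N, (psum G (i + 1) + psum G i) * (psum F (i + 1) - psum F i)
      = ∑ i : Fin N, ∑ j : Fin N, kk i j * G j * F i := by
  rw [← Fin.sum_univ_eq_sum_range]
  apply Finset.sum_congr rfl
  intro i _
  rw [psum_succ G i i.isLt, psum_succ F i i.isLt, ← Finset.sum_mul, kk_row]
  simp only [Fin.eta]
  ring

lemma reindex' {N : ℕ} (σ : Equiv.Perm (Fin N)) (w y : Fin N → ℝ) :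
    ∑ i : Fin N, ∑ j : Fin N, kk i j * (w (σ j) * y (σ j)) * w (σ i)
      = ∑ p : Fin N, ∑ q : Fin N, kk (σ.symm p) (σ.symm q) * (w q * y q) * w p := by
  apply Fintype.sum_equiv σ
  intro i
  apply Fintype.sum_equiv σ
  intro j
  simp


/-- in the weighted setting, the average of the best-case and worst-case CAP
areas equals the area obtained by connecting the aggregated (tie-free) corner set by
straight lines: `(A↓ + A↑)/2 = A*`. -/
theorem stmt14 (n K : ℕ) (y m w : Fin n → ℝ) (hw : ∀ i, 0 < w i)
    (W T : ℝ) (hW : W = ∑ i, w i) (hT : T = ∑ i, w i * y i) (hTpos : 0 < T)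
    (σd σu : Equiv.Perm (Fin n))
    (hd1 : Antitone (fun i : Fin n => m (σd i)))
    (hd2 : ∀ j k : Fin n, j < k → m (σd j) = m (σd k) → y (σd k) ≤ y (σd j))
    (hu1 : Antitone (fun i : Fin n => m (σu i)))
    (hu2 : ∀ j k : Fin n, j < k → m (σu j) = m (σu k) → y (σu j) ≤ y (σu k))
    (αd Cd αu Cu : ℕ → ℝ)
    (hαd : ∀ i : ℕ, αd i = (1 / W) * psum (fun j => w (σd j)) i)
    (hCd : ∀ i : ℕ, Cd i = (1 / T) * psum (fun j => w (σd j) * y (σd j)) i)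
    (hαu : ∀ i : ℕ, αu i = (1 / W) * psum (fun j => w (σu j)) i)
    (hCu : ∀ i : ℕ, Cu i = (1 / T) * psum (fun j => w (σu j) * y (σu j)) i)
    (Ad Au : ℝ)
    (hAd : Ad = (∑ i ∈ Finset.range n,
      (Cd (i + 1) + Cd i) * (αd (i + 1) - αd i) / 2) - 1 / 2)
    (hAu : Au = (∑ i ∈ Finset.range n,
      (Cu (i + 1) + Cu i) * (αu (i + 1) - αu i) / 2) - 1 / 2)
    (mstar : Fin K → ℝ) (hstar : StrictAnti mstar)
    (hcover : ∀ i, ∃ k, m i = mstar k)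
    (hattain : ∀ k, ∃ i, m i = mstar k)
    (wstar tstar : Fin K → ℝ)
    (hwstar : ∀ k, wstar k = ∑ i ∈ Finset.univ.filter (fun i : Fin n => m i = mstar k), w i)
    (htstar : ∀ k, tstar k
      = ∑ i ∈ Finset.univ.filter (fun i : Fin n => m i = mstar k), w i * y i)
    (αstar Cstar : ℕ → ℝ)
    (hαstar : ∀ k : ℕ, αstar k = (1 / W) * psum wstar k)
    (hCstar : ∀ k : ℕ, Cstar k = (1 / T) * psum tstar k)
    (Astar : ℝ)
    (hAstar : Astar = (∑ k ∈ Finset.range K,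
      (Cstar (k + 1) + Cstar k) * (αstar (k + 1) - αstar k) / 2) - 1 / 2) :
    (Ad + Au) / 2 = Astar := by
  classical
  choose φ hφ using hcover
  -- position lemmas
  have posm : ∀ (σ : Equiv.Perm (Fin n)), Antitone (fun i : Fin n => m (σ i)) →
      ∀ p q : Fin n, m q < m p → σ.symm p < σ.symm q := by
    intro σ h1 p q h
    rcases lt_or_ge (σ.symm p) (σ.symm q) with h' | h'
    · exact h'
    · have h2 := h1 h'
      simp only [Equiv.apply_symm_apply] at h2
      exact absurd h2 (not_le_of_gt h)
  have posd : ∀ p q : Fin n, m p = m q → y q < y p → σd.symm p < σd.symm q := by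
    intro p q hm hy
    rcases lt_trichotomy (σd.symm p) (σd.symm q) with h | h | h
    · exact h
    · have hpq : p = q := by
        have h3 := congrArg σd h
        simpa using h3
      rw [hpq] at hy; exact absurd hy (lt_irrefl _)
    · have h2 := hd2 (σd.symm q) (σd.symm p) h (by simp [hm])
      simp only [Equiv.apply_symm_apply] at h2
      exact absurd h2 (not_le_of_gt hy)
  have posu : ∀ p q : Fin n, m p = m q → y q < y p → σu.symm q < σu.symm p := by
    intro p q hm hy
    rcases lt_trichotomy (σu.symm q) (σu.symm p) with h | h | h
    · exact h
    · have hpq : p = q := by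
        have h3 := congrArg σu h.symm
        simpa using h3
      rw [hpq] at hy; exact absurd hy (lt_irrefl _)
    · have h2 := hu2 (σu.symm p) (σu.symm q) h (by simp [hm])
      simp only [Equiv.apply_symm_apply] at h2
      exact absurd h2 (not_le_of_gt hy)
  have hφlt : ∀ p q : Fin n, m q < m p → φ p < φ q := by
    intro p q h
    have h2 : mstar (φ q) < mstar (φ p) := by rw [← hφ p, ← hφ q]; exact h
    exact hstar.lt_iff_gt.mp h2
  have hφeq : ∀ p q : Fin n, m p = m q → φ p = φ q := by
    intro p q h
    exact hstar.injective (by rw [← hφ p, ← hφ q]; exact h)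
  have hfiber : ∀ k : Fin K, (Finset.univ.filter fun i : Fin n => m i = mstar k)
      = Finset.univ.filter fun i : Fin n => φ i = k := by
    intro k; ext i
    simp only [Finset.mem_filter, Finset.mem_univ, true_and]
    constructor
    · intro h; exact hstar.injective (by rw [← hφ i, h])
    · intro h; rw [hφ i, h]
  -- pointwise pair identity
  have pair : ∀ p q : Fin n,
      kk (σd.symm p) (σd.symm q) * (w q * y q) * w p
        + kk (σd.symm q) (σd.symm p) * (w p * y p) * w q
        + (kk (σu.symm p) (σu.symm q) * (w q * y q) * w p
        + kk (σu.symm q) (σu.symm p) * (w p * y p) * w q)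
      = 2 * (kk (φ p) (φ q) * (w q * y q) * w p)
        + 2 * (kk (φ q) (φ p) * (w p * y p) * w q) := by
    intro p q
    have had := kk_add_swap (σd.symm p) (σd.symm q)
    have hau := kk_add_swap (σu.symm p) (σu.symm q)
    have hac := kk_add_swap (φ p) (φ q)
    have key : (kk (σd.symm p) (σd.symm q) + kk (σu.symm p) (σu.symm q)
        - 2 * kk (φ p) (φ q)) * (w q * y q * w p - w p * y p * w q) = 0 := by
      rcases eq_or_ne p q with rfl | hpq
      · ring
      rcases lt_trichotomy (m p) (m q) with hm | hm | hm
      · rw [kk_of_gt (posm σd hd1 q p hm), kk_of_gt (posm σu hu1 q p hm),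
          kk_of_gt (hφlt q p hm)]
        ring
      · rcases lt_trichotomy (y p) (y q) with hy | hy | hy
        · rw [kk_of_gt (posd q p hm.symm hy), kk_of_lt (posu q p hm.symm hy),
            hφeq p q hm, kk_self]
          ring
        · rw [hy]; ring
        · rw [kk_of_lt (posd p q hm hy), kk_of_gt (posu p q hm hy),
            hφeq p q hm, kk_self]
          ring
      · rw [kk_of_lt (posm σd hd1 p q hm), kk_of_lt (posm σu hu1 p q hm),
          kk_of_lt (hφlt p q hm)]
        ring
    linear_combination key + (w p * y p * w q) * had + (w p * y p * w q) * hau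
      - 2 * (w p * y p * w q) * hac
  -- summed pair identity
  have key2 : (∑ p : Fin n, ∑ q : Fin n, kk (σd.symm p) (σd.symm q) * (w q * y q) * w p)
      + (∑ p : Fin n, ∑ q : Fin n, kk (σu.symm p) (σu.symm q) * (w q * y q) * w p)
      = 2 * ∑ p : Fin n, ∑ q : Fin n, kk (φ p) (φ q) * (w q * y q) * w p := by
    have e : ∑ p : Fin n, ∑ q : Fin n,
        (kk (σd.symm p) (σd.symm q) * (w q * y q) * w p
          + kk (σd.symm q) (σd.symm p) * (w p * y p) * w q
          + (kk (σu.symm p) (σu.symm q) * (w q * y q) * w p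
          + kk (σu.symm q) (σu.symm p) * (w p * y p) * w q))
        = ∑ p : Fin n, ∑ q : Fin n,
        (2 * (kk (φ p) (φ q) * (w q * y q) * w p)
          + 2 * (kk (φ q) (φ p) * (w p * y p) * w q)) :=
      Finset.sum_congr rfl fun p _ => Finset.sum_congr rfl fun q _ => pair p q
    have swapd : ∑ p : Fin n, ∑ q : Fin n, kk (σd.symm q) (σd.symm p) * (w p * y p) * w q
        = ∑ p : Fin n, ∑ q : Fin n, kk (σd.symm p) (σd.symm q) * (w q * y q) * w p :=
      Finset.sum_comm
    have swapu : ∑ p : Fin n, ∑ q : Fin n, kk (σu.symm q) (σu.symm p) * (w p * y p) * w q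
        = ∑ p : Fin n, ∑ q : Fin n, kk (σu.symm p) (σu.symm q) * (w q * y q) * w p :=
      Finset.sum_comm
    have swaps : ∑ p : Fin n, ∑ q : Fin n, kk (φ q) (φ p) * (w p * y p) * w q
        = ∑ p : Fin n, ∑ q : Fin n, kk (φ p) (φ q) * (w q * y q) * w p :=
      Finset.sum_comm
    simp only [Finset.sum_add_distrib, ← Finset.mul_sum] at e
    rw [swapd, swapu, swaps] at e
    linarith
  -- star double-sum expansion
  have row : ∀ k : Fin K, ∑ l : Fin K, kk k l * tstar l
      = ∑ q : Fin n, kk k (φ q) * (w q * y q) := by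
    intro k
    rw [← Finset.sum_fiberwise Finset.univ φ (fun q => kk k (φ q) * (w q * y q))]
    apply Finset.sum_congr rfl
    intro l _
    rw [htstar l, hfiber l, Finset.mul_sum]
    apply Finset.sum_congr rfl
    intro q hq
    rw [(Finset.mem_filter.mp hq).2]
  have hBs : ∑ k : Fin K, ∑ l : Fin K, kk k l * tstar l * wstar k
      = ∑ p : Fin n, ∑ q : Fin n, kk (φ p) (φ q) * (w q * y q) * w p := by
    rw [← Finset.sum_fiberwise Finset.univ φ
      (fun p => ∑ q : Fin n, kk (φ p) (φ q) * (w q * y q) * w p)]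
    apply Finset.sum_congr rfl
    intro k _
    rw [← Finset.sum_mul, row k, hwstar k, hfiber k, Finset.mul_sum]
    apply Finset.sum_congr rfl
    intro p hp
    have hpk := (Finset.mem_filter.mp hp).2
    rw [Finset.sum_mul]
    apply Finset.sum_congr rfl
    intro q _
    rw [hpk]
  -- area conversions
  have hAd' : Ad = 1 / W * (1 / T) * (1 / 2) *
      (∑ p : Fin n, ∑ q : Fin n, kk (σd.symm p) (σd.symm q) * (w q * y q) * w p)
      - 1 / 2 := by
    rw [hAd]
    congr 1
    rw [← reindex' σd w y,
      ← area_double (fun j => w (σd j)) (fun j => w (σd j) * y (σd j)), Finset.mul_sum]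
    apply Finset.sum_congr rfl
    intro i _
    rw [hCd, hCd, hαd, hαd]
    ring
  have hAu' : Au = 1 / W * (1 / T) * (1 / 2) *
      (∑ p : Fin n, ∑ q : Fin n, kk (σu.symm p) (σu.symm q) * (w q * y q) * w p)
      - 1 / 2 := by
    rw [hAu]
    congr 1
    rw [← reindex' σu w y,
      ← area_double (fun j => w (σu j)) (fun j => w (σu j) * y (σu j)), Finset.mul_sum]
    apply Finset.sum_congr rfl
    intro i _
    rw [hCu, hCu, hαu, hαu]
    ring
  have hAs' : Astar = 1 / W * (1 / T) * (1 / 2) *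
      (∑ p : Fin n, ∑ q : Fin n, kk (φ p) (φ q) * (w q * y q) * w p) - 1 / 2 := by
    rw [hAstar]
    congr 1
    rw [← hBs, ← area_double wstar tstar, Finset.mul_sum]
    apply Finset.sum_congr rfl
    intro k _
    rw [hCstar, hCstar, hαstar, hαstar]
    ring
  rw [hAd', hAu', hAs']
  linear_combination (1 / W * (1 / T) * (1 / 2) / 2) * key2
end

section
/- Let y_1, …, y_n ∈ ℝ with S = Σ y_i > 0, and suppose the predictions are constant, m_1 = … = m_n. Then σ↓ is a decreasing rearrangement of y and σ↑ is an increasing rearrangement of y, and the mid-solution CAP is the diagonal at all corner points as far as areas are concerned: with C_i = (1/(2S))Σ_{j=1}^i (y_{σ↓(j)} + y_{σ↑(j)}), the mid-solution area A = Σ_{i=1}^n (C_i + C_{i−1})/(2n) − 1/2 equals 0; hence the Gini score A/B is zero whenever B > 0. -/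
lemma psum_eq_ite {n : ℕ} (f : Fin n → ℝ) (i : ℕ) :
    psum f i = ∑ j : Fin n, if (j : ℕ) < i then f j else 0 := by
  rw [psum, Finset.sum_filter]

lemma psum_add {n : ℕ} (f g : Fin n → ℝ) (i : ℕ) :
    psum (fun j => f j + g j) i = psum f i + psum g i := by
  simp [psum, Finset.sum_add_distrib]

/-- if the predictions are constant (one big tie), then `σ↓` arranges the
responses decreasingly, `σ↑` arranges them increasingly, the mid-solution area `A` is `0`,
and hence the Gini score `A/B` is zero whenever `B > 0`. -/
theorem stmt15 (n : ℕ) (y m : Fin n → ℝ)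
    (S : ℝ) (hS : S = ∑ i, y i) (hSpos : 0 < S)
    (hconst : ∀ i j, m i = m j)
    (σd σu : Equiv.Perm (Fin n))
    (hd1 : Antitone (fun i : Fin n => m (σd i)))
    (hd2 : ∀ j k : Fin n, j < k → m (σd j) = m (σd k) → y (σd k) ≤ y (σd j))
    (hu1 : Antitone (fun i : Fin n => m (σu i)))
    (hu2 : ∀ j k : Fin n, j < k → m (σu j) = m (σu k) → y (σu j) ≤ y (σu k))
    (C : ℕ → ℝ)
    (hC : ∀ i : ℕ, C i = (1 / (2 * S)) * psum (fun j => y (σd j) + y (σu j)) i)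
    (A : ℝ)
    (hA : A = (∑ i ∈ Finset.range n, (C (i + 1) + C i) / (2 * n)) - 1 / 2) :
    Antitone (fun i : Fin n => y (σd i)) ∧
    Monotone (fun i : Fin n => y (σu i)) ∧
    A = 0 ∧
    (∀ B : ℝ, 0 < B → A / B = 0) := by
  -- monotonicity facts
  have hda : Antitone (fun i : Fin n => y (σd i)) := by
    intro j k hjk
    rcases eq_or_lt_of_le hjk with h | h
    · subst h; exact le_rfl
    · exact hd2 j k h (hconst _ _)
  have hum : Monotone (fun i : Fin n => y (σu i)) := by
    intro j k hjk
    rcases eq_or_lt_of_le hjk with h | h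
    · subst h; exact le_rfl
    · exact hu2 j k h (hconst _ _)
  -- n is positive
  have hn : 0 < n := by
    rcases Nat.eq_zero_or_pos n with h | h
    · exfalso; subst h; simp at hS; subst hS; exact lt_irrefl _ hSpos
    · exact h
  -- the increasing rearrangement is the reverse of the decreasing one
  have hmono1 : Monotone (y ∘ (Fin.revPerm.trans σd)) := by
    intro j k hjk
    exact hda (Fin.rev_le_rev.mpr hjk)
  have hmono2 : Monotone (y ∘ σu) := hum
  have hrev : ∀ j : Fin n, y (σd (Fin.rev j)) = y (σu j) := by
    intro j
    have := congrFun (Tuple.unique_monotone hmono1 hmono2) j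
    simpa using this
  set d : Fin n → ℝ := fun j => y (σd j) with hd
  set u : Fin n → ℝ := fun j => y (σu j) with hu
  have hSd : (∑ j, d j) = S := by
    rw [hS]; exact Equiv.sum_comp σd y
  -- key symmetry of partial sums
  have hsplit : ∀ i : ℕ, i ≤ n → psum u i + psum d (n - i) = S := by
    intro i hi
    have h1 : psum u i = ∑ j : Fin n, if ((Fin.rev j : Fin n) : ℕ) < i then d j else 0 := by
      rw [psum_eq_ite]
      rw [← Equiv.sum_comp Fin.revPerm
        (fun j : Fin n => if ((Fin.rev j : Fin n) : ℕ) < i then d j else 0)]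
      refine Finset.sum_congr rfl fun j _ => ?_
      simp [Fin.rev_rev, hd, hu, hrev j]
    rw [h1, psum_eq_ite, ← Finset.sum_add_distrib, ← hSd]
    refine Finset.sum_congr rfl fun j _ => ?_
    have hjlt : (j : ℕ) < n := j.isLt
    have hrv : ((Fin.rev j : Fin n) : ℕ) = n - 1 - (j : ℕ) := by
      simp [Fin.val_rev]; omega
    rw [hrv]
    by_cases hcase : n - 1 - (j : ℕ) < i
    · rw [if_pos hcase, if_neg (by omega)]; ring
    · rw [if_neg hcase, if_pos (by omega)]; ring
  have hSne : (2 * S) ≠ 0 := by positivity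
  have hCsym : ∀ i : ℕ, i ≤ n → C i + C (n - i) = 1 := by
    intro i hi
    rw [hC, hC]
    have e1 : psum (fun j => y (σd j) + y (σu j)) i = psum d i + psum u i := psum_add _ _ _
    have e2 : psum (fun j => y (σd j) + y (σu j)) (n - i) = psum d (n - i) + psum u (n - i) :=
      psum_add _ _ _
    rw [e1, e2]
    have h1 := hsplit i hi
    have h2 := hsplit (n - i) (Nat.sub_le _ _)
    rw [show n - (n - i) = i by omega] at h2
    field_simp
    ring
    linarith
  -- total sum
  have hT : (∑ i ∈ Finset.range n, (C (i + 1) + C i)) = n := by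
    have hrefl : (∑ i ∈ Finset.range n, (C (n - 1 - i + 1) + C (n - 1 - i)))
        = ∑ i ∈ Finset.range n, (C (i + 1) + C i) :=
      Finset.sum_range_reflect (fun i => C (i + 1) + C i) n
    have h2 : (∑ i ∈ Finset.range n, (C (i + 1) + C i))
        + (∑ i ∈ Finset.range n, (C (i + 1) + C i)) = 2 * n := by
      nth_rewrite 2 [← hrefl]
      rw [← Finset.sum_add_distrib]
      have : ∀ i ∈ Finset.range n,
          (C (i + 1) + C i) + (C (n - 1 - i + 1) + C (n - 1 - i)) = 2 := by
        intro i hi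
        have hi' : i < n := Finset.mem_range.mp hi
        have e1 : n - 1 - i + 1 = n - i := by omega
        have e2 : n - 1 - i = n - (i + 1) := by omega
        rw [e1, e2]
        have h3 := hCsym (i + 1) (by omega)
        have h4 := hCsym i (by omega)
        linarith
      rw [Finset.sum_congr rfl this, Finset.sum_const, Finset.card_range]
      push_cast; ring
    linarith
  have hnR : (n : ℝ) ≠ 0 := Nat.cast_ne_zero.mpr hn.ne'
  have hA0 : A = 0 := by
    rw [hA, ← Finset.sum_div, hT]
    field_simp
    ring
  refine ⟨hda, hum, hA0, fun B hB => by rw [hA0, zero_div]⟩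
end

section
/- Let y_1 ≥ y_2 ≥ … ≥ y_n ≥ 0 be nonincreasing responses with S = Σ y_i > 0, not all equal, and let the predictions be strictly increasing, m_1 < m_2 < … < m_n (a counter-monotonic setting). Then the unique ordering of the responses by decreasing predictions is the reversal i ↦ y_{n+1−i}, the CAP corner heights are C_i = (1/S)Σ_{j=1}^i y_{n+1−j}, and the CAP area A = Σ_{i=1}^n (C_i + C_{i−1})/(2n) − 1/2 satisfies A = −B < 0, where B = Σ_{i=1}^n (L_i + L_{i−1})/(2n) − 1/2 with L_i = (1/S)Σ_{j=1}^i y_j. -/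
lemma psum_zero {n : ℕ} (f : Fin n → ℝ) : psum f 0 = 0 := by
  simp [psum]

lemma psum_top {n : ℕ} (f : Fin n → ℝ) {i : ℕ} (h : n ≤ i) : psum f i = ∑ j, f j := by
  unfold psum
  congr 1
  rw [Finset.filter_true_of_mem]
  intro j _
  exact lt_of_lt_of_le j.isLt h

lemma psum_rev {n : ℕ} (y : Fin n → ℝ) (i : ℕ) :
    psum (fun j : Fin n => y j.rev) i = (∑ j, y j) - psum y (n - i) := by
  have h1 : psum (fun j : Fin n => y j.rev) i
      = ∑ j ∈ Finset.univ.filter (fun j : Fin n => ¬ ((j : ℕ) < n - i)), y j := by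
    unfold psum
    refine Finset.sum_equiv (Fin.revPerm (n := n)).symm ?_ ?_
    · intro j
      simp only [Finset.mem_filter, Finset.mem_univ, true_and, Fin.revPerm_symm, Fin.revPerm_apply]
      have hj := j.isLt
      have hv : ((j.rev : Fin n) : ℕ) = n - 1 - (j : ℕ) := by
        rw [Fin.val_rev]; omega
      rw [hv]
      omega
    · intro j _
      simp
  rw [h1, eq_sub_iff_add_eq, psum, Finset.sum_filter_not_add_sum_filter]

lemma card_filter_val_lt (n i : ℕ) (h : i ≤ n) :
    (Finset.univ.filter fun j : Fin n => (j : ℕ) < i).card = i := by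
  rw [show i = (Finset.range i).card from (Finset.card_range i).symm]
  apply Finset.card_bij (fun (a : Fin n) _ => (a : ℕ))
  · intro a ha
    simp only [Finset.mem_filter, Finset.mem_univ, true_and] at ha
    simpa using ha
  · intro a _ b _ hab
    exact Fin.ext hab
  · intro b hb
    simp only [Finset.mem_range] at hb
    exact ⟨⟨b, lt_of_lt_of_le hb h⟩, by simp [hb], rfl⟩

/-- lower bound on head partial sum -/
lemma psum_ge {n : ℕ} (y : Fin n → ℝ) (i : ℕ) (hi : i ≤ n) (a : ℝ)
    (ha : ∀ j : Fin n, (j : ℕ) < i → a ≤ y j) : (i : ℝ) * a ≤ psum y i := by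
  have := Finset.card_nsmul_le_sum
    (Finset.univ.filter fun j : Fin n => (j : ℕ) < i) y a
    (fun j hj => ha j (by simpa using (Finset.mem_filter.mp hj).2))
  rw [card_filter_val_lt n i hi, nsmul_eq_mul] at this
  exact this

/-- upper bound on tail sum -/
lemma tail_le {n : ℕ} (y : Fin n → ℝ) (i : ℕ) (hi : i ≤ n) (a : ℝ)
    (ha : ∀ j : Fin n, i ≤ (j : ℕ) → y j ≤ a) :
    (∑ j, y j) - psum y i ≤ ((n : ℝ) - i) * a := by
  have hsplit : psum y i + ∑ j ∈ Finset.univ.filter (fun j : Fin n => ¬ ((j : ℕ) < i)), y j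
      = ∑ j, y j := by
    rw [psum, Finset.sum_filter_add_sum_filter_not]
  have hcard : (Finset.univ.filter fun j : Fin n => ¬ ((j : ℕ) < i)).card = n - i := by
    have h1 := Finset.card_filter_add_card_filter_not
      (s := (Finset.univ : Finset (Fin n))) (p := fun j : Fin n => (j : ℕ) < i)
    rw [card_filter_val_lt n i hi, Finset.card_univ, Fintype.card_fin] at h1
    omega
  have hle := Finset.sum_le_card_nsmul
    (Finset.univ.filter fun j : Fin n => ¬ ((j : ℕ) < i)) y a
    (fun j hj => ha j (by
      have := (Finset.mem_filter.mp hj).2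
      omega))
  rw [hcard, nsmul_eq_mul] at hle
  have hcast : ((n - i : ℕ) : ℝ) = (n : ℝ) - i := by
    push_cast [hi]; ring
  rw [hcast] at hle
  linarith [hsplit, hle]

/-- main nonstrict majorization inequality -/
lemma key_le {n : ℕ} (y : Fin n → ℝ) (hpos : ∀ i, 0 ≤ y i) (hymon : Antitone y)
    (i : ℕ) (hi : i ≤ n) : (i : ℝ) * (∑ j, y j) ≤ (n : ℝ) * psum y i := by
  rcases Nat.eq_zero_or_pos i with rfl | hi0
  · simp only [Nat.cast_zero, zero_mul]
    have : 0 ≤ psum y 0 := by simp [psum_zero]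
    positivity
  · have hlt : i - 1 < n := by omega
    set a := y ⟨i - 1, hlt⟩ with ha
    have hP : (i : ℝ) * a ≤ psum y i :=
      psum_ge y i hi a (fun j hj => hymon (by simp only [Fin.le_def]; omega))
    have hT : (∑ j, y j) - psum y i ≤ ((n : ℝ) - i) * a :=
      tail_le y i hi a (fun j hj => hymon (by simp only [Fin.le_def]; omega))
    have hngei : (i : ℝ) ≤ (n : ℝ) := by exact_mod_cast hi
    have hi0' : (0 : ℝ) ≤ (i : ℝ) := by positivity
    nlinarith [mul_le_mul_of_nonneg_left hT hi0',
      mul_le_mul_of_nonneg_left hP (by linarith : (0:ℝ) ≤ (n:ℝ) - i)]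

/-- strict version at a drop point -/
lemma key_lt {n : ℕ} (y : Fin n → ℝ) (hpos : ∀ i, 0 ≤ y i) (hymon : Antitone y)
    (t : ℕ) (ht : t + 1 < n) (hdrop : y ⟨t + 1, ht⟩ < y ⟨t, by omega⟩) :
    ((t + 1 : ℕ) : ℝ) * (∑ j, y j) < (n : ℝ) * psum y (t + 1) := by
  set i := t + 1 with hidef
  have hi : i ≤ n := by omega
  set a := y ⟨t, by omega⟩ with ha
  set b := y ⟨t + 1, ht⟩ with hb
  have hP : (i : ℝ) * a ≤ psum y i :=
    psum_ge y i hi a (fun j hj => hymon (by simp only [Fin.le_def]; omega))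
  have hT : (∑ j, y j) - psum y i ≤ ((n : ℝ) - i) * b :=
    tail_le y i hi b (fun j hj => hymon (by simp only [Fin.le_def]; omega))
  have hiv : (i : ℝ) = (t : ℝ) + 1 := by rw [hidef]; push_cast; ring
  have hi1 : (1 : ℝ) ≤ (i : ℝ) := by
    have ht0 : (0:ℝ) ≤ (t:ℝ) := Nat.cast_nonneg t
    rw [hiv]; linarith
  have hni : (1 : ℝ) ≤ (n : ℝ) - i := by
    have h4 : i + 1 ≤ n := by omega
    have h5 : ((i + 1 : ℕ) : ℝ) ≤ (n : ℝ) := by exact_mod_cast h4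
    push_cast at h5; linarith
  have e1 := mul_le_mul_of_nonneg_left hT (by linarith : (0:ℝ) ≤ (i : ℝ))
  have e2 := mul_le_mul_of_nonneg_left hP (by linarith : (0:ℝ) ≤ (n:ℝ) - i)
  have e3 : (i : ℝ) * (((n : ℝ) - i) * b) < (i : ℝ) * (((n : ℝ) - i) * a) := by
    apply mul_lt_mul_of_pos_left _ (by linarith : (0:ℝ) < (i:ℝ))
    exact mul_lt_mul_of_pos_left hdrop (by linarith)
  nlinarith [e1, e2, e3]

/-- existence of a strict consecutive drop -/
lemma drop_exists {n : ℕ} (y : Fin n → ℝ) (hymon : Antitone y)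
    (hne : ∃ j k, j ≠ k ∧ y j ≠ y k) :
    ∃ t : ℕ, ∃ ht : t + 1 < n, y ⟨t + 1, ht⟩ < y ⟨t, by omega⟩ := by
  by_contra hcon
  push_neg at hcon
  have hstep : ∀ t : ℕ, ∀ ht : t + 1 < n, y ⟨t, by omega⟩ = y ⟨t + 1, ht⟩ := by
    intro t ht
    have h1 := hcon t ht
    have h2 : y ⟨t + 1, ht⟩ ≤ y ⟨t, by omega⟩ :=
      hymon (by simp [Fin.le_def])
    linarith
  have hconst : ∀ d : ℕ, ∀ t : ℕ, ∀ h : t + d < n, y ⟨t, by omega⟩ = y ⟨t + d, h⟩ := by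
    intro d
    induction d with
    | zero => intro t h; rfl
    | succ d ih =>
      intro t h
      have h1 : t + d < n := by omega
      have := ih t h1
      rw [this]
      have := hstep (t + d) (by omega)
      convert this using 3 <;> omega
  obtain ⟨j, k, hjk, hy⟩ := hne
  rcases lt_trichotomy j k with h | h | h
  · have hle : (j : ℕ) + ((k : ℕ) - (j : ℕ)) < n := by
      have := k.isLt; have := Fin.lt_iff_val_lt_val.mp h; omega
    have h6 := hconst ((k : ℕ) - (j : ℕ)) (j : ℕ) hle
    apply hy
    have hj : (⟨(j : ℕ), by omega⟩ : Fin n) = j := rfl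
    have hk : (⟨(j : ℕ) + ((k : ℕ) - (j : ℕ)), hle⟩ : Fin n) = k := by
      apply Fin.ext; simp only; have := Fin.lt_iff_val_lt_val.mp h; omega
    rw [hj, hk] at h6
    exact h6
  · exact hjk h
  · have hle : (k : ℕ) + ((j : ℕ) - (k : ℕ)) < n := by
      have := j.isLt; have := Fin.lt_iff_val_lt_val.mp h; omega
    have h6 := hconst ((j : ℕ) - (k : ℕ)) (k : ℕ) hle
    apply hy
    have hk : (⟨(k : ℕ), by omega⟩ : Fin n) = k := rfl
    have hj : (⟨(k : ℕ) + ((j : ℕ) - (k : ℕ)), hle⟩ : Fin n) = j := by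
      apply Fin.ext; simp only; have := Fin.lt_iff_val_lt_val.mp h; omega
    rw [hk, hj] at h6
    exact h6.symm

/-- in the counter-monotonic setting (responses nonincreasing, predictions
strictly increasing), the unique ordering of the responses by decreasing predictions is the
reversal, and the CAP area satisfies `A = -B < 0`. -/
theorem stmt16 (n : ℕ) (y m : Fin n → ℝ) (hpos : ∀ i, 0 ≤ y i)
    (hymon : Antitone y)
    (S : ℝ) (hS : S = ∑ i, y i) (hSpos : 0 < S)
    (hne : ∃ j k, j ≠ k ∧ y j ≠ y k)
    (hm : StrictMono m)
    (C L : ℕ → ℝ)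
    (hC : ∀ i : ℕ, C i = (1 / S) * psum (fun j : Fin n => y j.rev) i)
    (hL : ∀ i : ℕ, L i = (1 / S) * psum y i)
    (A B : ℝ)
    (hA : A = (∑ i ∈ Finset.range n, (C (i + 1) + C i) / (2 * n)) - 1 / 2)
    (hB : B = (∑ i ∈ Finset.range n, (L (i + 1) + L i) / (2 * n)) - 1 / 2) :
    (∀ σ : Equiv.Perm (Fin n), Antitone (fun i : Fin n => m (σ i)) → ∀ i, σ i = i.rev) ∧
    A = -B ∧ A < 0 := by
  have hSne : S ≠ 0 := ne_of_gt hSpos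
  have hn : 0 < n := by
    rcases Nat.eq_zero_or_pos n with rfl | h
    · rw [hS] at hSpos; simp at hSpos
    · exact h
  have hnR : (0 : ℝ) < n := by exact_mod_cast hn
  -- Part 1
  have part1 : ∀ σ : Equiv.Perm (Fin n), Antitone (fun i : Fin n => m (σ i)) →
      ∀ i, σ i = i.rev := by
    intro σ hσ i
    have hanti : Antitone (fun i : Fin n => σ i) := fun a b hab => (hm.le_iff_le).mp (hσ hab)
    have hsa : StrictAnti (fun i : Fin n => σ i) :=
      hanti.strictAnti_of_injective σ.injective
    have hcomp : StrictMono (fun i : Fin n => σ i.rev) :=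
      hsa.comp (fun a b hab => Fin.rev_lt_rev.mpr hab)
    have hr : Set.range (fun i : Fin n => σ i.rev) = Set.range (id : Fin n → Fin n) := by
      rw [Set.range_id]
      exact Set.range_eq_univ.mpr fun b => ⟨(σ.symm b).rev, by simp⟩
    have heq : (fun i : Fin n => σ i.rev) = (id : Fin n → Fin n) :=
      (StrictMono.range_inj hcomp strictMono_id).mp hr
    have h2 := congrFun heq i.rev
    simpa using h2
  -- relation between C and L
  have hCL : ∀ i : ℕ, C i = 1 - L (n - i) := by
    intro i
    rw [hC, hL, psum_rev, ← hS]
    field_simp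
  -- Part 2 : A = -B
  have hsumL : ∀ i ∈ Finset.range n, (C (i + 1) + C i) / (2 * (n : ℝ))
      = 2 / (2 * n) - (L (n - 1 - i + 1) + L (n - 1 - i)) / (2 * n) := by
    intro i hi
    rw [Finset.mem_range] at hi
    rw [hCL (i + 1), hCL i]
    have e1 : n - (i + 1) = n - 1 - i := by omega
    have e2 : n - i = n - 1 - i + 1 := by omega
    rw [e1, e2]
    ring
  have hsumC : (∑ i ∈ Finset.range n, (C (i + 1) + C i) / (2 * (n : ℝ)))
      = 1 - ∑ i ∈ Finset.range n, (L (i + 1) + L i) / (2 * n) := by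
    rw [Finset.sum_congr rfl hsumL, Finset.sum_sub_distrib, Finset.sum_const,
      Finset.card_range, nsmul_eq_mul,
      Finset.sum_range_reflect (fun i => (L (i + 1) + L i) / (2 * (n : ℝ))) n]
    congr 1
    field_simp
  have part2 : A = -B := by
    rw [hA, hB, hsumC]; ring
  -- Part 3 : A < 0, i.e. B > 0
  obtain ⟨t, ht, hdrop⟩ := drop_exists y hymon hne
  have hkey : ∀ i ∈ Finset.range n, (i : ℝ) * S ≤ (n : ℝ) * psum y i := by
    intro i hi
    rw [Finset.mem_range] at hi
    rw [hS]
    exact key_le y hpos hymon i (le_of_lt hi)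
  have hkeylt : (((t + 1 : ℕ)) : ℝ) * S < (n : ℝ) * psum y (t + 1) := by
    rw [hS]; exact key_lt y hpos hymon t ht hdrop
  have hsumlt : ∑ i ∈ Finset.range n, (i : ℝ) * S
      < ∑ i ∈ Finset.range n, (n : ℝ) * psum y i :=
    Finset.sum_lt_sum hkey ⟨t + 1, Finset.mem_range.mpr ht, hkeylt⟩
  set T := ∑ i ∈ Finset.range n, psum y i with hT
  have hlhs : ∑ i ∈ Finset.range n, (i : ℝ) * S = ((n : ℝ) * (n - 1) / 2) * S := by
    rw [← Finset.sum_mul]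
    congr 1
    have h2 : (∑ i ∈ Finset.range n, i) * 2 = n * (n - 1) := Finset.sum_range_id_mul_two n
    have h3 : ((∑ i ∈ Finset.range n, i : ℕ) : ℝ) * 2 = (n : ℝ) * ((n : ℝ) - 1) := by
      calc ((∑ i ∈ Finset.range n, i : ℕ) : ℝ) * 2
          = (((∑ i ∈ Finset.range n, i) * 2 : ℕ) : ℝ) := by push_cast; ring
        _ = ((n * (n - 1) : ℕ) : ℝ) := by rw [h2]
        _ = (n : ℝ) * ((n : ℝ) - 1) := by
            rw [Nat.cast_mul, Nat.cast_sub hn]; push_cast; ring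
    have h4 : (∑ i ∈ Finset.range n, (i : ℝ)) = ((∑ i ∈ Finset.range n, i : ℕ) : ℝ) :=
      (Nat.cast_sum _ _).symm
    rw [h4]
    linarith [h3]
  have hrhs : ∑ i ∈ Finset.range n, (n : ℝ) * psum y i = (n : ℝ) * T := by
    rw [hT, Finset.mul_sum]
  have h2T : ((n : ℝ) - 1) * S < 2 * T := by
    rw [hlhs, hrhs] at hsumlt
    nlinarith [hsumlt, hnR]
  -- compute B
  have hPsucc : ∑ i ∈ Finset.range n, psum y (i + 1) = T + S := by
    have := Finset.sum_range_succ' (fun i => psum y i) n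
    have h1 : ∑ i ∈ Finset.range (n + 1), psum y i = T + psum y n := by
      rw [Finset.sum_range_succ]
    rw [h1, psum_zero, psum_top y (le_refl n), ← hS] at this
    linarith [this]
  have hBsum : ∑ i ∈ Finset.range n, (L (i + 1) + L i) / (2 * (n : ℝ))
      = (2 * T + S) / (S * (2 * n)) := by
    have h1 : ∀ i, L (i + 1) + L i = (1 / S) * (psum y (i + 1) + psum y i) := by
      intro i; rw [hL, hL]; ring
    calc ∑ i ∈ Finset.range n, (L (i + 1) + L i) / (2 * (n : ℝ))
        = (∑ i ∈ Finset.range n, (L (i + 1) + L i)) / (2 * n) := by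
          rw [Finset.sum_div]
      _ = ((1 / S) * ∑ i ∈ Finset.range n, (psum y (i + 1) + psum y i)) / (2 * n) := by
          rw [Finset.mul_sum]
          congr 1
          exact Finset.sum_congr rfl fun i _ => h1 i
      _ = ((1 / S) * (2 * T + S)) / (2 * n) := by
          rw [Finset.sum_add_distrib, hPsucc]
          congr 2
          ring
      _ = (2 * T + S) / (S * (2 * n)) := by
          field_simp
  have hBpos : 0 < B := by
    rw [hB, hBsum]
    rw [sub_pos, div_lt_div_iff₀ (by norm_num) (by positivity)]
    nlinarith [h2T, hSpos]
  exact ⟨part1, part2, by rw [part2]; linarith⟩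
end
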